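/- arXiv:1909.10871 — 3 statements merged into one kernel-verified Lean document; each statement's English description precedes it below -/
import Mathlib

section
/- Let α = Σ'_{|J|=p+1} α_J dx^J be a (p+1)-form on ℝⁿ with smooth coefficients. Then pointwise |dα|² = Σ'_{|J|=p+1} Σ_{j=1}^n |∂α_J/∂x_j|² − Σ'_{|I|=p} Σ_{j,k=1}^n (∂α_{kI}/∂x_j)(∂α_{jI}/∂x_k), where α_{kI} is defined by antisymmetry: α_{σ(J)} = sgn(σ) α_J for increasing J, and α_{kI} = 0 if k ∈ I. -/
open MeasureTheory Filter Topology

noncomputable section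

/-- Euclidean space `ℝⁿ`. -/
abbrev Rn (n : ℕ) := EuclideanSpace ℝ (Fin n)

variable {n : ℕ}

/-- The partial derivative `∂f/∂x_j` (classical, via the Fréchet derivative). -/
def pd (j : Fin n) (f : Rn n → ℝ) (x : Rn n) : ℝ :=
  fderiv ℝ f x (EuclideanSpace.single j 1)

/-- Smooth compactly supported test functions. -/
def IsTest (ψ : Rn n → ℝ) : Prop := ContDiff ℝ (⊤ : ℕ∞) ψ ∧ HasCompactSupport ψ

/-- A `p`-form on `ℝⁿ`, given by its (antisymmetric) coefficients on all `p`-tuples. -/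
abbrev Form (n p : ℕ) := (Fin p → Fin n) → Rn n → ℝ

/-- The coefficients are alternating (antisymmetric) in the indices. -/
def IsAlt {p : ℕ} (α : Form n p) : Prop :=
  ∀ (σ : Equiv.Perm (Fin p)) (J : Fin p → Fin n) (x : Rn n),
    α (J ∘ σ) x = ((Equiv.Perm.sign σ : ℤ) : ℝ) * α J x

/-- Pointwise squared norm `|α|²(x)`: sum of squares of the coefficients over strictly
increasing multi-indices, here expressed as `(p!)⁻¹` times the sum over all tuples. -/
def normSq {p : ℕ} (α : Form n p) (x : Rn n) : ℝ :=
  (Nat.factorial p : ℝ)⁻¹ * ∑ J : Fin p → Fin n, (α J x) ^ 2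

/-- Membership in the weighted space `L²_p(ℝⁿ, e^{-φ})`. -/
def MemL2F (φ : Rn n → ℝ) {p : ℕ} (α : Form n p) : Prop :=
  (∀ J, AEStronglyMeasurable (α J) volume) ∧
  Integrable (fun x => normSq α x * Real.exp (-(φ x)))

/-- The weighted inner product `⟨α, β⟩_{L²_p(e^{-φ})}`. -/
def innerF (φ : Rn n → ℝ) {p : ℕ} (α β : Form n p) : ℝ :=
  ∫ x, ((Nat.factorial p : ℝ)⁻¹ * ∑ J : Fin p → Fin n, α J x * β J x) * Real.exp (-(φ x))

/-- The weighted squared norm `‖α‖²_{L²_p(e^{-φ})} = ∫ |α|² e^{-φ}`. -/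
def norm2F (φ : Rn n → ℝ) {p : ℕ} (α : Form n p) : ℝ :=
  ∫ x, normSq α x * Real.exp (-(φ x))

/-- `du = f` in the sense of distributions, in coordinates:
`f_M = Σ_k (-1)^k ∂_{M k} u_{M ∘ succAbove k}` tested against all test functions. -/
def WeakD {p : ℕ} (u : Form n p) (f : Form n (p + 1)) : Prop :=
  ∀ (M : Fin (p + 1) → Fin n) (ψ : Rn n → ℝ), IsTest ψ →
    ∫ x, f M x * ψ x
      = - ∑ k : Fin (p + 1), (-1 : ℝ) ^ (k : ℕ) * ∫ x, u (M ∘ k.succAbove) x * pd (M k) ψ x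

/-- `df = 0` in the sense of distributions (`f` is `d`-closed). -/
def WeakDZero {p : ℕ} (f : Form n (p + 1)) : Prop :=
  ∀ (M : Fin (p + 2) → Fin n) (ψ : Rn n → ℝ), IsTest ψ →
    ∑ k : Fin (p + 2), (-1 : ℝ) ^ (k : ℕ) * ∫ x, f (M ∘ k.succAbove) x * pd (M k) ψ x = 0

/-- Classical exterior derivative of a smooth form. -/
def dC {p : ℕ} (α : Form n p) : Form n (p + 1) :=
  fun M x => ∑ k : Fin (p + 1), (-1 : ℝ) ^ (k : ℕ) * pd (M k) (α (M ∘ k.succAbove)) x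

/-- The formal adjoint `T*` of `d` in `L²(e^{-φ})`:
`(T*α)_I = -e^{φ} Σ_j ∂_j (α_{jI} e^{-φ}) = Σ_j (-∂_j α_{jI} + α_{jI} ∂_j φ)`. -/
def Tstar (φ : Rn n → ℝ) {p : ℕ} (α : Form n (p + 1)) : Form n p :=
  fun I x => ∑ j : Fin n,
    (-(pd j (α (Fin.cons j I)) x) + α (Fin.cons j I) x * pd j φ x)

/-- A form with smooth compactly supported coefficients. -/
def IsSmoothC {p : ℕ} (α : Form n p) : Prop :=
  ∀ J, ContDiff ℝ (⊤ : ℕ∞) (α J) ∧ HasCompactSupport (α J)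

/-- `f ∈ Dom(T*)` with `T* f = h`, for the Hilbert space adjoint `T*` of the maximal
(distributional) extension `T` of `d : L²_p(e^{-φ}) → L²_{p+1}(e^{-φ})`. -/
def IsAdjoint (φ : Rn n → ℝ) {p : ℕ} (f : Form n (p + 1)) (h : Form n p) : Prop :=
  MemL2F φ f ∧ MemL2F φ h ∧
  ∀ (u : Form n p) (g : Form n (p + 1)), MemL2F φ u → MemL2F φ g → WeakD u g →
    innerF φ g f = innerF φ u h


section Aux

variable {n p : ℕ}

lemma coe_sa {m : ℕ} (i : Fin (m + 1)) (j : Fin m) :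
    ((i.succAbove j : Fin (m + 1)) : ℕ) = if (j : ℕ) < (i : ℕ) then (j : ℕ) else (j : ℕ) + 1 := by
  rcases Nat.lt_or_ge (j : ℕ) (i : ℕ) with h | h
  · rw [if_pos h, Fin.succAbove_of_castSucc_lt _ _ (by simpa [Fin.lt_def] using h)]
    rfl
  · rw [if_neg (Nat.not_lt.mpr h), Fin.succAbove_of_le_castSucc _ _ (by simpa [Fin.le_def] using h)]
    rfl

lemma succAbove_succAbove_comm {m : ℕ} {k l : Fin (m + 2)} {l₁ k₁ : Fin (m + 1)}
    (hl : k.succAbove l₁ = l) (hk : l.succAbove k₁ = k) (t : Fin m) :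
    l.succAbove (k₁.succAbove t) = k.succAbove (l₁.succAbove t) := by
  have hlv : ((l : ℕ)) = if (l₁ : ℕ) < (k : ℕ) then (l₁ : ℕ) else (l₁ : ℕ) + 1 := by
    rw [← hl, coe_sa]
  have hkv : ((k : ℕ)) = if (k₁ : ℕ) < (l : ℕ) then (k₁ : ℕ) else (k₁ : ℕ) + 1 := by
    rw [← hk, coe_sa]
  apply Fin.ext
  rw [coe_sa, coe_sa, coe_sa, coe_sa]
  split_ifs at hlv hkv ⊢ <;> omega

lemma sign_aux {m : ℕ} {k l : Fin (m + 2)} {l₁ k₁ : Fin (m + 1)}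
    (hl : k.succAbove l₁ = l) (hk : l.succAbove k₁ = k) :
    (-1 : ℝ) ^ (k : ℕ) * (-1 : ℝ) ^ (l : ℕ) * ((-1 : ℝ) ^ (l₁ : ℕ) * (-1 : ℝ) ^ (k₁ : ℕ)) = -1 := by
  have hlv : ((l : ℕ)) = if (l₁ : ℕ) < (k : ℕ) then (l₁ : ℕ) else (l₁ : ℕ) + 1 := by
    rw [← hl, coe_sa]
  have hkv : ((k : ℕ)) = if (k₁ : ℕ) < (l : ℕ) then (k₁ : ℕ) else (k₁ : ℕ) + 1 := by
    rw [← hk, coe_sa]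
  have hne : (k : ℕ) ≠ (l : ℕ) := by
    intro h
    have hkl : k = l := Fin.ext h
    exact Fin.succAbove_ne k l₁ (hkl ▸ hl)
  have hodd : Odd ((k : ℕ) + (l : ℕ) + (l₁ : ℕ) + (k₁ : ℕ)) := by
    rw [Nat.odd_iff]
    split_ifs at hlv hkv <;> omega
  calc (-1 : ℝ) ^ (k : ℕ) * (-1 : ℝ) ^ (l : ℕ) * ((-1 : ℝ) ^ (l₁ : ℕ) * (-1 : ℝ) ^ (k₁ : ℕ))
      = (-1 : ℝ) ^ ((k : ℕ) + (l : ℕ) + (l₁ : ℕ) + (k₁ : ℕ)) := by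
        rw [pow_add, pow_add, pow_add]; ring
    _ = -1 := Odd.neg_one_pow hodd

lemma insertNth_eq_cons_comp {m : ℕ} {β : Type*} (i : Fin (m + 1)) (a : β) (f : Fin m → β) :
    Fin.insertNth i a f = Fin.cons a f ∘ ⇑i.cycleRange := by
  funext j
  rcases eq_or_ne j i with rfl | hj
  · simp [Fin.insertNth_apply_same, Fin.cycleRange_self]
  · obtain ⟨t, rfl⟩ := Fin.exists_succAbove_eq hj
    simp [Fin.insertNth_apply_succAbove, Fin.cycleRange_succAbove]

lemma alt_insertNth {q : ℕ} (α : Form n (q + 1)) (hα : IsAlt α) (i : Fin (q + 1)) (a : Fin n)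
    (f : Fin q → Fin n) (x : Rn n) :
    α (Fin.insertNth i a f) x = (-1 : ℝ) ^ (i : ℕ) * α (Fin.cons a f) x := by
  rw [insertNth_eq_cons_comp, hα i.cycleRange]
  norm_num [Fin.sign_cycleRange]

lemma pd_smul (c : ℝ) (f : Rn n → ℝ) (hf : ContDiff ℝ (⊤ : ℕ∞) f) (j : Fin n) (x : Rn n) :
    pd j (fun y => c * f y) x = c * pd j f x := by
  unfold pd
  rw [fderiv_const_mul ((hf.differentiable (by simp)).differentiableAt) c]
  simp

lemma pd_alt_insertNth (α : Form n (p + 1)) (hα : IsAlt α) (hsm : ∀ J, ContDiff ℝ (⊤ : ℕ∞) (α J))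
    (i : Fin (p + 1)) (a : Fin n) (f : Fin p → Fin n) (j : Fin n) (x : Rn n) :
    pd j (α (Fin.insertNth i a f)) x = (-1 : ℝ) ^ (i : ℕ) * pd j (α (Fin.cons a f)) x := by
  have h : α (Fin.insertNth i a f) = fun y => (-1 : ℝ) ^ (i : ℕ) * α (Fin.cons a f) y :=
    funext fun y => alt_insertNth α hα i a f y
  rw [h, pd_smul _ _ (hsm _)]

lemma sum_insertNth {N : ℕ} (k : Fin (N + 1)) (F : (Fin (N + 1) → Fin n) → ℝ) :
    ∑ M : Fin (N + 1) → Fin n, F M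
      = ∑ j : Fin n, ∑ g : Fin N → Fin n, F (Fin.insertNth k j g) := by
  rw [← (Fin.insertNthEquiv (fun _ => Fin n) k).sum_comp, Fintype.sum_prod_type]
  rfl

lemma sum_insertNth2 {N : ℕ} (k : Fin (N + 2)) (l₁ : Fin (N + 1))
    (F : (Fin (N + 2) → Fin n) → ℝ) :
    ∑ M : Fin (N + 2) → Fin n, F M
      = ∑ j : Fin n, ∑ m : Fin n, ∑ I : Fin N → Fin n,
          F (Fin.insertNth k j (Fin.insertNth l₁ m I)) := by
  rw [sum_insertNth k F]
  exact Finset.sum_congr rfl fun j _ => sum_insertNth l₁ _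

lemma diag_sum (α : Form n (p + 1)) (x : Rn n) (k : Fin (p + 2)) :
    ∑ M : Fin (p + 2) → Fin n, (pd (M k) (α (M ∘ k.succAbove)) x) ^ 2
      = ∑ J : Fin (p + 1) → Fin n, ∑ j : Fin n, (pd j (α J) x) ^ 2 := by
  rw [sum_insertNth k fun M => (pd (M k) (α (M ∘ k.succAbove)) x) ^ 2, Finset.sum_comm]
  refine Finset.sum_congr rfl fun J _ => Finset.sum_congr rfl fun j _ => ?_
  have h1 : (Fin.insertNth k j J : Fin (p + 2) → Fin n) k = j := by simp
  have h2 : (Fin.insertNth k j J : Fin (p + 2) → Fin n) ∘ k.succAbove = J :=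
    funext fun t => by simp
  simp only [h1, h2]

lemma cross_sum (α : Form n (p + 1)) (hα : IsAlt α) (hsm : ∀ J, ContDiff ℝ (⊤ : ℕ∞) (α J))
    (x : Rn n) {k l : Fin (p + 2)} (hkl : l ≠ k) :
    (∑ M : Fin (p + 2) → Fin n,
      ((-1 : ℝ) ^ (k : ℕ) * pd (M k) (α (M ∘ k.succAbove)) x) *
        ((-1 : ℝ) ^ (l : ℕ) * pd (M l) (α (M ∘ l.succAbove)) x))
      = - ∑ I : Fin p → Fin n, ∑ j : Fin n, ∑ m : Fin n,
          pd j (α (Fin.cons m I)) x * pd m (α (Fin.cons j I)) x := by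
  obtain ⟨l₁, hl⟩ := Fin.exists_succAbove_eq hkl
  obtain ⟨k₁, hk⟩ := Fin.exists_succAbove_eq hkl.symm
  rw [sum_insertNth2 k l₁ fun M =>
    ((-1 : ℝ) ^ (k : ℕ) * pd (M k) (α (M ∘ k.succAbove)) x) *
      ((-1 : ℝ) ^ (l : ℕ) * pd (M l) (α (M ∘ l.succAbove)) x)]
  have main : ∀ (j m : Fin n) (I : Fin p → Fin n) (M : Fin (p + 2) → Fin n),
      M = Fin.insertNth k j (Fin.insertNth l₁ m I) →
      ((-1 : ℝ) ^ (k : ℕ) * pd (M k) (α (M ∘ k.succAbove)) x) *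
        ((-1 : ℝ) ^ (l : ℕ) * pd (M l) (α (M ∘ l.succAbove)) x)
      = -(pd j (α (Fin.cons m I)) x * pd m (α (Fin.cons j I)) x) := by
    intro j m I M hM
    have h1 : M k = j := by rw [hM]; simp
    have h2 : M ∘ k.succAbove = Fin.insertNth l₁ m I := funext fun t => by rw [hM]; simp
    have h3 : M l = m := by
      rw [hM, ← hl, Fin.insertNth_apply_succAbove, Fin.insertNth_apply_same]
    have h4 : M ∘ l.succAbove = Fin.insertNth k₁ j I := by
      funext t
      rcases eq_or_ne t k₁ with ht | ht
      · rw [ht]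
        show M (l.succAbove k₁) = _
        rw [hk, hM, Fin.insertNth_apply_same, Fin.insertNth_apply_same]
      · obtain ⟨s, rfl⟩ := Fin.exists_succAbove_eq ht
        show M (l.succAbove (k₁.succAbove s)) = _
        rw [succAbove_succAbove_comm hl hk, hM, Fin.insertNth_apply_succAbove,
          Fin.insertNth_apply_succAbove, Fin.insertNth_apply_succAbove]
    rw [h1, h2, h3, h4, pd_alt_insertNth α hα hsm, pd_alt_insertNth α hα hsm]
    linear_combination (pd j (α (Fin.cons m I)) x * pd m (α (Fin.cons j I)) x) * sign_aux hl hk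
  refine (Finset.sum_congr rfl fun j _ => Finset.sum_congr rfl fun m _ =>
      Finset.sum_congr rfl fun I _ => main j m I _ rfl).trans ?_
  simp only [Finset.sum_neg_distrib]
  congr 1
  calc ∑ j : Fin n, ∑ m : Fin n, ∑ I : Fin p → Fin n,
        pd j (α (Fin.cons m I)) x * pd m (α (Fin.cons j I)) x
      = ∑ j : Fin n, ∑ I : Fin p → Fin n, ∑ m : Fin n,
        pd j (α (Fin.cons m I)) x * pd m (α (Fin.cons j I)) x :=
        Finset.sum_congr rfl fun j _ => Finset.sum_comm
    _ = ∑ I : Fin p → Fin n, ∑ j : Fin n, ∑ m : Fin n,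
        pd j (α (Fin.cons m I)) x * pd m (α (Fin.cons j I)) x := Finset.sum_comm

lemma neg_one_pow_mul_self (i : ℕ) (a : ℝ) :
    ((-1 : ℝ) ^ i * a) * ((-1 : ℝ) ^ i * a) = a ^ 2 := by
  have h : ((-1 : ℝ) ^ i) ^ 2 = 1 := by
    rw [← pow_mul, mul_comm, pow_mul, neg_one_sq, one_pow]
  calc ((-1 : ℝ) ^ i * a) * ((-1 : ℝ) ^ i * a) = ((-1 : ℝ) ^ i) ^ 2 * a ^ 2 := by ring
    _ = a ^ 2 := by rw [h, one_mul]

end Aux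

/-- pointwise formula
`|dα|² = Σ'_J Σ_j |∂_j α_J|² - Σ'_I Σ_{j,k} (∂_j α_{kI})(∂_k α_{jI})`. -/
theorem stmt1 {n p : ℕ} (α : Form n (p + 1)) (hα : IsAlt α)
    (hsm : ∀ J, ContDiff ℝ (⊤ : ℕ∞) (α J)) (x : Rn n) :
    normSq (dC α) x
      = (Nat.factorial (p + 1) : ℝ)⁻¹ *
          (∑ J : Fin (p + 1) → Fin n, ∑ j : Fin n, (pd j (α J) x) ^ 2)
        - (Nat.factorial p : ℝ)⁻¹ *
          (∑ I : Fin p → Fin n, ∑ j : Fin n, ∑ k : Fin n,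
            pd j (α (Fin.cons k I)) x * pd k (α (Fin.cons j I)) x) := by
  classical
  have expand : ∀ M : Fin (p + 2) → Fin n, (dC α M x) ^ 2
      = ∑ k : Fin (p + 2), ∑ l : Fin (p + 2),
          ((-1 : ℝ) ^ (k : ℕ) * pd (M k) (α (M ∘ k.succAbove)) x) *
            ((-1 : ℝ) ^ (l : ℕ) * pd (M l) (α (M ∘ l.succAbove)) x) := by
    intro M
    show (∑ k : Fin (p + 2), (-1 : ℝ) ^ (k : ℕ) * pd (M k) (α (M ∘ k.succAbove)) x) ^ 2 = _
    rw [pow_two, Finset.sum_mul_sum]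
  set A := ∑ J : Fin (p + 1) → Fin n, ∑ j : Fin n, (pd j (α J) x) ^ 2 with hA
  set B := ∑ I : Fin p → Fin n, ∑ j : Fin n, ∑ k : Fin n,
      pd j (α (Fin.cons k I)) x * pd k (α (Fin.cons j I)) x with hB
  have key : ∑ M : Fin (p + 2) → Fin n, (dC α M x) ^ 2
      = ((p : ℝ) + 2) * A - (((p : ℝ) + 2) * ((p : ℝ) + 1)) * B := by
    calc ∑ M : Fin (p + 2) → Fin n, (dC α M x) ^ 2
        = ∑ M : Fin (p + 2) → Fin n, ∑ k : Fin (p + 2), ∑ l : Fin (p + 2),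
            ((-1 : ℝ) ^ (k : ℕ) * pd (M k) (α (M ∘ k.succAbove)) x) *
              ((-1 : ℝ) ^ (l : ℕ) * pd (M l) (α (M ∘ l.succAbove)) x) :=
          Finset.sum_congr rfl fun M _ => expand M
      _ = ∑ k : Fin (p + 2), ∑ M : Fin (p + 2) → Fin n, ∑ l : Fin (p + 2),
            ((-1 : ℝ) ^ (k : ℕ) * pd (M k) (α (M ∘ k.succAbove)) x) *
              ((-1 : ℝ) ^ (l : ℕ) * pd (M l) (α (M ∘ l.succAbove)) x) := Finset.sum_comm
      _ = ∑ k : Fin (p + 2), ∑ l : Fin (p + 2), ∑ M : Fin (p + 2) → Fin n,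
            ((-1 : ℝ) ^ (k : ℕ) * pd (M k) (α (M ∘ k.succAbove)) x) *
              ((-1 : ℝ) ^ (l : ℕ) * pd (M l) (α (M ∘ l.succAbove)) x) :=
          Finset.sum_congr rfl fun k _ => Finset.sum_comm
      _ = ∑ k : Fin (p + 2), (((p : ℝ) + 1) * (-B) + A) := by
          refine Finset.sum_congr rfl fun k _ => ?_
          rw [← Finset.sum_erase_add _ _ (Finset.mem_univ k)]
          congr 1
          · calc ∑ l ∈ Finset.univ.erase k, ∑ M : Fin (p + 2) → Fin n,
                ((-1 : ℝ) ^ (k : ℕ) * pd (M k) (α (M ∘ k.succAbove)) x) *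
                  ((-1 : ℝ) ^ (l : ℕ) * pd (M l) (α (M ∘ l.succAbove)) x)
                = ∑ l ∈ Finset.univ.erase k, (-B) :=
                  Finset.sum_congr rfl fun l hl =>
                    cross_sum α hα hsm x (Finset.ne_of_mem_erase hl)
              _ = ((p : ℝ) + 1) * (-B) := by
                  rw [Finset.sum_const, Finset.card_erase_of_mem (Finset.mem_univ k),
                    Finset.card_univ, Fintype.card_fin, nsmul_eq_mul]
                  push_cast
                  ring
          · calc ∑ M : Fin (p + 2) → Fin n,
                ((-1 : ℝ) ^ (k : ℕ) * pd (M k) (α (M ∘ k.succAbove)) x) *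
                  ((-1 : ℝ) ^ (k : ℕ) * pd (M k) (α (M ∘ k.succAbove)) x)
                = ∑ M : Fin (p + 2) → Fin n, (pd (M k) (α (M ∘ k.succAbove)) x) ^ 2 :=
                  Finset.sum_congr rfl fun M _ => neg_one_pow_mul_self _ _
              _ = A := diag_sum α x k
      _ = ((p : ℝ) + 2) * A - (((p : ℝ) + 2) * ((p : ℝ) + 1)) * B := by
          rw [Finset.sum_const, Finset.card_univ, Fintype.card_fin, nsmul_eq_mul]
          push_cast
          ring
  show (Nat.factorial (p + 2) : ℝ)⁻¹ * ∑ M : Fin (p + 2) → Fin n, (dC α M x) ^ 2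
      = (Nat.factorial (p + 1) : ℝ)⁻¹ * A - (Nat.factorial p : ℝ)⁻¹ * B
  rw [key]
  have f2 : (Nat.factorial (p + 2) : ℝ)
      = ((p : ℝ) + 2) * (((p : ℝ) + 1) * (Nat.factorial p : ℝ)) := by
    rw [Nat.factorial_succ, Nat.factorial_succ]
    push_cast
    ring
  have f1 : (Nat.factorial (p + 1) : ℝ) = ((p : ℝ) + 1) * (Nat.factorial p : ℝ) := by
    rw [Nat.factorial_succ]
    push_cast
    ring
  have h0 : (Nat.factorial p : ℝ) ≠ 0 := Nat.cast_ne_zero.mpr (Nat.factorial_ne_zero p)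
  have h1 : ((p : ℝ) + 1) ≠ 0 := by positivity
  have h2 : ((p : ℝ) + 2) ≠ 0 := by positivity
  rw [f2, f1]
  field_simp
end
end

section
/- Let φ be a smooth function on ℝⁿ whose Hessian satisfies Σ_{j,k} (∂²φ/∂x_j∂x_k) ω_j ω_k ≥ c|ω|² for all ω ∈ ℝⁿ and some c > 0. Then for every smooth compactly supported (p+1)-form α, ‖T*α‖²_{L²_p(e^{-φ})} + ‖dα‖²_{L²_{p+2}(e^{-φ})} ≥ c(p+1)‖α‖²_{L²_{p+1}(e^{-φ})}. -/
open MeasureTheory Filter Topology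

noncomputable section

variable {n : ℕ}

section Helpers

variable {n : ℕ}

lemma pd_neg (f : Rn n → ℝ) (j : Fin n) (x : Rn n) :
    pd j (fun y => -(f y)) x = -(pd j f x) := by
  simp [pd, fderiv_neg]

lemma pd_fun_add {f g : Rn n → ℝ} (hf : Differentiable ℝ f) (hg : Differentiable ℝ g)
    (j : Fin n) (x : Rn n) :
    pd j (fun y => f y + g y) x = pd j f x + pd j g x := by
  simp [pd, fderiv_fun_add (hf x) (hg x)]

lemma pd_fun_mul {f g : Rn n → ℝ} (hf : Differentiable ℝ f) (hg : Differentiable ℝ g)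
    (j : Fin n) (x : Rn n) :
    pd j (fun y => f y * g y) x = f x * pd j g x + g x * pd j f x := by
  simp [pd, fderiv_fun_mul (hf x) (hg x)]

lemma pd_exp_neg {φ : Rn n → ℝ} (hφ : Differentiable ℝ φ) (j : Fin n) (x : Rn n) :
    pd j (fun y => Real.exp (-(φ y))) x = -(pd j φ x) * Real.exp (-(φ x)) := by
  have h1 : HasFDerivAt (fun y => -(φ y)) (-(fderiv ℝ φ x)) x := ((hφ x).hasFDerivAt).neg
  have h2 : HasFDerivAt (fun y => Real.exp (-(φ y)))
      (Real.exp (-(φ x)) • (-(fderiv ℝ φ x))) x :=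
    by have := (Real.hasDerivAt_exp (-(φ x))).comp_hasFDerivAt x h1; exact this
  rw [pd, h2.fderiv]
  simp [pd, mul_comm]

lemma contDiff_pd {f : Rn n → ℝ} (hf : ContDiff ℝ (⊤ : ℕ∞) f) (j : Fin n) :
    ContDiff ℝ (⊤ : ℕ∞) (pd j f) :=
  (hf.fderiv_right (by simp)).clm_apply contDiff_const

lemma continuous_pd {f : Rn n → ℝ} (hf : ContDiff ℝ (⊤ : ℕ∞) f) (j : Fin n) :
    Continuous (pd j f) := (contDiff_pd hf j).continuous

lemma hcs_pd {f : Rn n → ℝ} (hf : HasCompactSupport f) (j : Fin n) :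
    HasCompactSupport (pd j f) := by
  apply (hf.fderiv ℝ).mono
  intro x hx
  simp only [Function.mem_support, ne_eq] at hx ⊢
  intro h
  exact hx (by simp [pd, h])

lemma pd_comm {f : Rn n → ℝ} (hf : ContDiff ℝ (⊤ : ℕ∞) f) (j k : Fin n) (x : Rn n) :
    pd j (pd k f) x = pd k (pd j f) x := by
  have hsymm : IsSymmSndFDerivAt ℝ f x :=
    (hf.contDiffAt).isSymmSndFDerivAt (by rw [minSmoothness_of_isRCLikeNormedField]; exact WithTop.coe_le_coe.mpr le_top)
  have hd : DifferentiableAt ℝ (fderiv ℝ f) x :=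
    ((hf.fderiv_right (m := (⊤ : ℕ∞)) (by simp)).differentiable (by simp)) x
  have e1 : ∀ (v : Rn n), pd j (fun y => fderiv ℝ f y v) x
      = (fderiv ℝ (fderiv ℝ f) x) (EuclideanSpace.single j 1) v := by
    intro v
    rw [pd, fderiv_clm_apply hd (differentiableAt_const v)]
    simp
  have e2 : ∀ (v : Rn n), pd k (fun y => fderiv ℝ f y v) x
      = (fderiv ℝ (fderiv ℝ f) x) (EuclideanSpace.single k 1) v := by
    intro v
    rw [pd, fderiv_clm_apply hd (differentiableAt_const v)]
    simp
  show pd j (fun y => fderiv ℝ f y (EuclideanSpace.single k 1)) x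
      = pd k (fun y => fderiv ℝ f y (EuclideanSpace.single j 1)) x
  rw [e1, e2, hsymm]

end Helpers
section IBP

variable {n : ℕ}

lemma integ_cc {f : Rn n → ℝ} (hf : Continuous f) (hc : HasCompactSupport f) :
    Integrable f := hf.integrable_of_hasCompactSupport hc

/-- Basic integration by parts on `ℝⁿ`. -/
lemma ibp0 {f g : Rn n → ℝ} (hf : ContDiff ℝ (⊤ : ℕ∞) f) (hg : ContDiff ℝ (⊤ : ℕ∞) g)
    (hgc : HasCompactSupport g) (j : Fin n) :
    ∫ x, pd j f x * g x = - ∫ x, f x * pd j g x := by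
  obtain ⟨R, hR⟩ := (Metric.isBounded_iff_subset_ball (0 : Rn n)).1 hgc.isBounded
  have hR0 : 0 < max R 1 := lt_max_of_lt_right one_pos
  have hsub : tsupport g ⊆ Metric.ball (0 : Rn n) (max R 1) :=
    hR.trans (Metric.ball_subset_ball (le_max_left _ _))
  set χ : ContDiffBump (0 : Rn n) := ⟨max R 1, max R 1 + 1, hR0, by linarith⟩ with hχ
  set F : Rn n → ℝ := fun y => χ y * f y with hF
  have hχ1 : ∀ y ∈ Metric.ball (0 : Rn n) (max R 1), χ y = 1 := fun y hy =>
    χ.one_of_mem_closedBall (Metric.ball_subset_closedBall hy)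
  have hFsm : ContDiff ℝ ((⊤ : ℕ∞) : WithTop ℕ∞) F := χ.contDiff.mul (hf.of_le (by simp))
  have hFc : HasCompactSupport F := χ.hasCompactSupport.mul_right
  obtain ⟨C, hC⟩ := hFsm.lipschitzWith_of_hasCompactSupport hFc (by simp)
  obtain ⟨D, hD⟩ := (hg.of_le (by simp) :
    ContDiff ℝ ((⊤ : ℕ∞) : WithTop ℕ∞) g).lipschitzWith_of_hasCompactSupport hgc (by simp)
  have key := hC.integral_lineDeriv_mul_eq (μ := (volume : Measure (Rn n))) hD hgc
    (EuclideanSpace.single j 1)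
  have hFf : ∀ x ∈ tsupport g, F =ᶠ[nhds x] f := by
    intro x hx
    filter_upwards [Metric.isOpen_ball.mem_nhds (hsub hx)] with y hy
    simp [hF, hχ1 y hy]
  have hL : (fun x => lineDeriv ℝ F x (EuclideanSpace.single j 1) * g x)
      = fun x => pd j f x * g x := by
    funext x
    by_cases hx : x ∈ tsupport g
    · have h1 : lineDeriv ℝ F x (EuclideanSpace.single j 1) = pd j f x := by
        rw [((hFsm.differentiable (by simp)) x).lineDeriv_eq_fderiv, pd,
          Filter.EventuallyEq.fderiv_eq (hFf x hx)]
      rw [h1]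
    · simp [image_eq_zero_of_notMem_tsupport hx]
  have hRn : (fun x => lineDeriv ℝ g x (-(EuclideanSpace.single j 1)) * F x)
      = fun x => -(f x * pd j g x) := by
    funext x
    by_cases hx : x ∈ tsupport g
    · have h1 : lineDeriv ℝ g x (-(EuclideanSpace.single j 1)) = -(pd j g x) := by
        rw [(hg.differentiable (by simp) x).lineDeriv_eq_fderiv, pd, map_neg]
      have h2 : F x = f x := by simp [hF, hχ1 x (hsub hx)]
      rw [h1, h2]; ring
    · have h0 : g =ᶠ[nhds x] 0 := notMem_tsupport_iff_eventuallyEq.1 hx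
      have h1 : fderiv ℝ g x = 0 := by
        have : fderiv ℝ g x = fderiv ℝ (fun _ => (0:ℝ)) x := Filter.EventuallyEq.fderiv_eq h0
        rw [this, fderiv_fun_const]
        rfl
      have h2 : lineDeriv ℝ g x (-(EuclideanSpace.single j 1)) = 0 := by
        rw [(hg.differentiable (by simp) x).lineDeriv_eq_fderiv, h1]; rfl
      have h3 : pd j g x = 0 := by rw [pd, h1]; rfl
      rw [h2, h3]; ring
  rw [← hL, key, hRn, integral_neg]

/-- Weighted integration by parts: `∫ (∂_j w) v e^{-φ} = ∫ w (-∂_j v + v ∂_j φ) e^{-φ}`. -/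
lemma ibp_w (φ : Rn n → ℝ) (hφ : ContDiff ℝ (⊤ : ℕ∞) φ) {w v : Rn n → ℝ}
    (hw : ContDiff ℝ (⊤ : ℕ∞) w) (hwc : HasCompactSupport w) (hv : ContDiff ℝ (⊤ : ℕ∞) v) (j : Fin n) :
    ∫ x, pd j w x * (v x * Real.exp (-(φ x)))
      = ∫ x, w x * ((-(pd j v x) + v x * pd j φ x) * Real.exp (-(φ x))) := by
  set F : Rn n → ℝ := fun y => v y * Real.exp (-(φ y)) with hFdef
  have hE : ContDiff ℝ (⊤ : ℕ∞) (fun y => Real.exp (-(φ y))) := Real.contDiff_exp.comp hφ.neg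
  have hFsm : ContDiff ℝ (⊤ : ℕ∞) F := hv.mul hE
  have hpdF : ∀ x, pd j F x = (pd j v x - v x * pd j φ x) * Real.exp (-(φ x)) := by
    intro x
    rw [hFdef]
    rw [pd_fun_mul (hv.differentiable (by simp)) (hE.differentiable (by simp)) j x,
      pd_exp_neg (hφ.differentiable (by simp)) j x]
    ring
  have h := ibp0 hFsm hw hwc j
  have e1 : (fun x => pd j w x * (v x * Real.exp (-(φ x)))) = fun x => F x * pd j w x :=
    funext fun x => mul_comm _ _
  have e2 : (fun x => -(pd j F x * w x))
      = fun x => w x * ((-(pd j v x) + v x * pd j φ x) * Real.exp (-(φ x))) := by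
    funext x
    rw [hpdF x]
    ring
  calc ∫ x, pd j w x * (v x * Real.exp (-(φ x)))
      = ∫ x, F x * pd j w x := by rw [e1]
    _ = - ∫ x, pd j F x * w x := by linarith [h]
    _ = ∫ x, -(pd j F x * w x) := (integral_neg _).symm
    _ = ∫ x, w x * ((-(pd j v x) + v x * pd j φ x) * Real.exp (-(φ x))) := by rw [e2]

end IBP
section Pair

variable {n : ℕ}

/-- `δ*_j u = -∂_j u + u ∂_j φ`. -/
def dsF (φ : Rn n → ℝ) (j : Fin n) (u : Rn n → ℝ) : Rn n → ℝ :=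
  fun x => -(pd j u x) + u x * pd j φ x

lemma intext {f g : Rn n → ℝ} (h : ∀ x, f x = g x) : ∫ x, f x = ∫ x, g x := by
  rw [funext h]

lemma pd_eq_zero_of_nmem {u : Rn n → ℝ} {x : Rn n} (hx : x ∉ tsupport u) (j : Fin n) :
    pd j u x = 0 := by
  have h0 : u =ᶠ[nhds x] 0 := notMem_tsupport_iff_eventuallyEq.1 hx
  have h1 : fderiv ℝ u x = fderiv ℝ (fun _ => (0:ℝ)) x := Filter.EventuallyEq.fderiv_eq h0
  rw [pd, h1, fderiv_fun_const]
  rfl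

lemma contDiff_dsF {φ : Rn n → ℝ} (hφ : ContDiff ℝ (⊤ : ℕ∞) φ) {u : Rn n → ℝ}
    (hu : ContDiff ℝ (⊤ : ℕ∞) u) (j : Fin n) : ContDiff ℝ (⊤ : ℕ∞) (dsF φ j u) :=
  ((contDiff_pd hu j).neg).add (hu.mul (contDiff_pd hφ j))

lemma hcs_dsF (φ : Rn n → ℝ) {u : Rn n → ℝ} (huc : HasCompactSupport u) (j : Fin n) :
    HasCompactSupport (dsF φ j u) :=
  HasCompactSupport.intro huc (fun x hx => by
    simp [dsF, pd_eq_zero_of_nmem hx j, image_eq_zero_of_notMem_tsupport hx])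

/-- The key integration-by-parts identity for pairs of `δ*` terms. -/
lemma ibp_pair (φ : Rn n → ℝ) (hφ : ContDiff ℝ (⊤ : ℕ∞) φ) {u v : Rn n → ℝ}
    (hu : ContDiff ℝ (⊤ : ℕ∞) u) (huc : HasCompactSupport u)
    (hv : ContDiff ℝ (⊤ : ℕ∞) v) (hvc : HasCompactSupport v) (j k : Fin n) :
    ∫ x, dsF φ j u x * dsF φ k v x * Real.exp (-(φ x))
      = (∫ x, pd k (pd j φ) x * (u x * v x) * Real.exp (-(φ x)))
        + ∫ x, pd k u x * pd j v x * Real.exp (-(φ x)) := by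
  have hE : Continuous (fun x => Real.exp (-(φ x))) :=
    Real.continuous_exp.comp (hφ.continuous.neg)
  -- step 1
  have s1 : ∫ x, dsF φ j u x * dsF φ k v x * Real.exp (-(φ x))
      = ∫ x, pd k (dsF φ j u) x * (v x * Real.exp (-(φ x))) := by
    have h := ibp_w φ hφ (contDiff_dsF hφ hu j) (hcs_dsF φ huc j) hv k
    rw [h]
    exact intext fun x => by simp only [dsF]; ring
  -- step 2 (pointwise)
  have s2 : ∀ x, pd k (dsF φ j u) x
      = dsF φ j (pd k u) x + u x * pd k (pd j φ) x := by
    intro x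
    have d1 : Differentiable ℝ (fun y => -(pd j u y)) :=
      ((contDiff_pd hu j).differentiable (by simp)).neg
    have d2 : Differentiable ℝ (fun y => u y * pd j φ y) :=
      (hu.differentiable (by simp)).mul ((contDiff_pd hφ j).differentiable (by simp))
    have e1 : pd k (dsF φ j u) x
        = pd k (fun y => -(pd j u y)) x + pd k (fun y => u y * pd j φ y) x := by
      rw [show dsF φ j u = fun y => -(pd j u y) + u y * pd j φ y from rfl]
      exact pd_fun_add d1 d2 k x
    rw [e1, pd_neg (pd j u) k x,
      pd_fun_mul (hu.differentiable (by simp)) ((contDiff_pd hφ j).differentiable (by simp)) k x]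
    simp only [dsF]
    rw [pd_comm hu j k x]
    ring
  -- step 4
  have s4 : ∫ x, dsF φ j (pd k u) x * (v x * Real.exp (-(φ x)))
      = ∫ x, pd k u x * pd j v x * Real.exp (-(φ x)) := by
    have h := ibp_w φ hφ hv hvc (contDiff_pd hu k) j
    rw [show (∫ x, pd k u x * pd j v x * Real.exp (-(φ x)))
        = ∫ x, pd j v x * (pd k u x * Real.exp (-(φ x))) from intext fun x => by ring]
    rw [h]
    exact intext fun x => by simp only [dsF]; ring
  -- integrability
  have i1 : Integrable (fun x => dsF φ j (pd k u) x * (v x * Real.exp (-(φ x)))) := by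
    apply integ_cc
    · exact ((contDiff_dsF hφ (contDiff_pd hu k) j).continuous).mul
        ((hv.continuous).mul hE)
    · exact (hvc.mul_right).mul_left
  have i2 : Integrable (fun x => u x * pd k (pd j φ) x * (v x * Real.exp (-(φ x)))) := by
    apply integ_cc
    · exact ((hu.continuous.mul (continuous_pd (contDiff_pd hφ j) k))).mul
        ((hv.continuous).mul hE)
    · exact (hvc.mul_right).mul_left
  calc ∫ x, dsF φ j u x * dsF φ k v x * Real.exp (-(φ x))
      = ∫ x, pd k (dsF φ j u) x * (v x * Real.exp (-(φ x))) := s1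
    _ = ∫ x, (dsF φ j (pd k u) x * (v x * Real.exp (-(φ x)))
          + u x * pd k (pd j φ) x * (v x * Real.exp (-(φ x)))) :=
        intext fun x => by rw [s2 x]; ring
    _ = (∫ x, dsF φ j (pd k u) x * (v x * Real.exp (-(φ x))))
          + ∫ x, u x * pd k (pd j φ) x * (v x * Real.exp (-(φ x))) := integral_add i1 i2
    _ = (∫ x, pd k (pd j φ) x * (u x * v x) * Real.exp (-(φ x)))
          + ∫ x, pd k u x * pd j v x * Real.exp (-(φ x)) := by
        rw [s4, add_comm]
        congr 1
        exact intext fun x => by ring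

end Pair
section Comb

variable {n p : ℕ}

/-- Formal exterior derivative of an array of coefficients. -/
def gD (β : Fin n → (Fin (p+1) → Fin n) → ℝ) : (Fin (p+2) → Fin n) → ℝ :=
  fun M => ∑ k : Fin (p+2), (-1:ℝ)^(k:ℕ) * β (M k) (M ∘ k.succAbove)

lemma swap_succAbove_castSucc {m : ℕ} (a i : Fin m) :
    Equiv.swap a.castSucc a.succ (a.castSucc.succAbove i) = a.succ.succAbove i := by
  rcases lt_trichotomy i a with h | h | h
  · rw [Fin.succAbove_of_castSucc_lt _ _ (by simpa using h),
      Fin.succAbove_of_castSucc_lt _ _ (Fin.castSucc_lt_succ_iff.mpr h.le)]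
    exact Equiv.swap_apply_of_ne_of_ne (by simpa using h.ne)
      (((Fin.castSucc_lt_castSucc_iff.mpr h).trans
        (Fin.castSucc_lt_succ_iff.mpr le_rfl)).ne)
  · subst h
    rw [Fin.succAbove_of_le_castSucc _ _ le_rfl,
      Fin.succAbove_of_castSucc_lt _ _ (Fin.castSucc_lt_succ_iff.mpr le_rfl)]
    exact Equiv.swap_apply_right _ _
  · rw [Fin.succAbove_of_le_castSucc _ _ (Fin.castSucc_le_castSucc_iff.mpr h.le),
      Fin.succAbove_of_le_castSucc _ _ (Fin.succ_le_castSucc_iff.mpr h)]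
    exact Equiv.swap_apply_of_ne_of_ne
      (((Fin.castSucc_lt_succ_iff.mpr le_rfl).trans
        (Fin.succ_lt_succ_iff.mpr h)).ne')
      (by simpa using h.ne')

lemma swap_succAbove_succ {m : ℕ} (a i : Fin m) :
    Equiv.swap a.castSucc a.succ (a.succ.succAbove i) = a.castSucc.succAbove i := by
  rw [← swap_succAbove_castSucc a i, Equiv.swap_apply_self]

lemma succAbove_castSucc_eq_succ {m : ℕ} (i r : Fin m) (h : r ≠ i) :
    i.castSucc.succAbove r = i.succ.succAbove r := by
  rcases lt_or_gt_of_ne h with h' | h'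
  · rw [Fin.succAbove_of_castSucc_lt _ _ (Fin.castSucc_lt_castSucc_iff.mpr h'),
      Fin.succAbove_of_castSucc_lt _ _ (Fin.castSucc_lt_succ_iff.mpr h'.le)]
  · rw [Fin.succAbove_of_le_castSucc _ _ (Fin.castSucc_le_castSucc_iff.mpr h'.le),
      Fin.succAbove_of_le_castSucc _ _ (Fin.succ_le_castSucc_iff.mpr h')]

/-- `gD β` changes sign under adjacent transpositions of the tuple. -/
lemma gD_swap_adj (β : Fin n → (Fin (p+1) → Fin n) → ℝ)
    (hβ : ∀ (j : Fin n) (J : Fin (p+1) → Fin n) (a b : Fin (p+1)), a ≠ b →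
      β j (J ∘ Equiv.swap a b) = -β j J)
    (M : Fin (p+2) → Fin n) (a : Fin (p+1)) :
    gD β (M ∘ Equiv.swap a.castSucc a.succ) = - gD β M := by
  set τ := Equiv.swap a.castSucc a.succ with hτ
  have hcs : a.castSucc ≠ a.succ := (Fin.castSucc_lt_succ_iff.mpr le_rfl).ne
  have key : ∀ k : Fin (p+2),
      (-1:ℝ)^(k:ℕ) * β ((M ∘ τ) k) ((M ∘ τ) ∘ k.succAbove)
      = -((-1:ℝ)^((τ k : Fin (p+2)) : ℕ) * β (M (τ k)) (M ∘ (τ k).succAbove)) := by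
    intro k
    by_cases hk1 : k = a.castSucc
    · subst hk1
      have h1 : τ a.castSucc = a.succ := Equiv.swap_apply_left _ _
      have h2 : (M ∘ τ) ∘ (a.castSucc).succAbove = M ∘ (a.succ).succAbove :=
        funext fun i => congrArg M (swap_succAbove_castSucc a i)
      have h3 : (M ∘ τ) a.castSucc = M a.succ := congrArg M h1
      rw [h2, h3, h1]
      rw [Fin.coe_castSucc, Fin.val_succ, pow_succ]
      ring
    · by_cases hk2 : k = a.succ
      · subst hk2
        have h1 : τ a.succ = a.castSucc := Equiv.swap_apply_right _ _
        have h2 : (M ∘ τ) ∘ (a.succ).succAbove = M ∘ (a.castSucc).succAbove :=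
          funext fun i => congrArg M (swap_succAbove_succ a i)
        have h3 : (M ∘ τ) a.succ = M a.castSucc := congrArg M h1
        rw [h2, h3, h1]
        rw [Fin.coe_castSucc, Fin.val_succ, pow_succ]
        ring
      · have hτk : τ k = k := Equiv.swap_apply_of_ne_of_ne hk1 hk2
        obtain ⟨ic, hic⟩ := Fin.exists_succAbove_eq (ne_comm.mp hk1)
        obtain ⟨is, his⟩ := Fin.exists_succAbove_eq (ne_comm.mp hk2)
        have hne : ic ≠ is := by
          intro h
          rw [h, his] at hic
          exact hcs hic.symm
        have h2 : (M ∘ τ) ∘ k.succAbove = (M ∘ k.succAbove) ∘ (Equiv.swap ic is) := by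
          funext i
          show M (τ (k.succAbove i)) = M (k.succAbove (Equiv.swap ic is i))
          congr 1
          have t1 : τ a.castSucc = a.succ := Equiv.swap_apply_left _ _
          have t2 : τ a.succ = a.castSucc := Equiv.swap_apply_right _ _
          by_cases hi1 : i = ic
          · subst hi1
            rw [hic, t1, Equiv.swap_apply_left, his]
          · by_cases hi2 : i = is
            · subst hi2
              rw [his, t2, Equiv.swap_apply_right, hic]
            · rw [Equiv.swap_apply_of_ne_of_ne hi1 hi2]
              exact Equiv.swap_apply_of_ne_of_ne
                (fun h => hi1 (Fin.succAbove_right_injective (h.trans hic.symm)))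
                (fun h => hi2 (Fin.succAbove_right_injective (h.trans his.symm)))
        have h3 : (M ∘ τ) k = M (τ k) := rfl
        rw [h2, h3, hτk]
        rw [hβ (M k) (M ∘ k.succAbove) ic is hne]
        ring
  calc gD β (M ∘ τ)
      = ∑ k : Fin (p+2), -((-1:ℝ)^((τ k : Fin (p+2)) : ℕ)
          * β (M (τ k)) (M ∘ (τ k).succAbove)) := Finset.sum_congr rfl fun k _ => key k
    _ = -∑ k : Fin (p+2), (-1:ℝ)^((τ k : Fin (p+2)) : ℕ)
          * β (M (τ k)) (M ∘ (τ k).succAbove) := by rw [Finset.sum_neg_distrib]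
    _ = - gD β M := by
        rw [Equiv.sum_comp τ (fun k => (-1:ℝ)^(k : ℕ) * β (M k) (M ∘ k.succAbove))]
        rfl

/-- Moving an inserted entry to the front costs `(-1)^c`. -/
lemma insert_move {m : ℕ} (G : (Fin (m+1) → Fin n) → ℝ)
    (hG : ∀ (N : Fin (m+1) → Fin n) (a : Fin m),
      G (N ∘ Equiv.swap a.castSucc a.succ) = -G N)
    (c : Fin (m+1)) (j0 : Fin n) (J : Fin m → Fin n) :
    G (Fin.insertNth c j0 J) = (-1:ℝ)^(c:ℕ) * G (Fin.cons j0 J) := by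
  induction c using Fin.induction with
  | zero => rw [Fin.insertNth_zero']; simp
  | succ i ih =>
    have hkey : Fin.insertNth i.succ j0 J
        = (Fin.insertNth i.castSucc j0 J) ∘ Equiv.swap i.castSucc i.succ := by
      funext q
      by_cases h1 : q = i.castSucc
      · subst h1
        have e1 : i.succ.succAbove i = i.castSucc :=
          Fin.succAbove_of_castSucc_lt _ _ (Fin.castSucc_lt_succ_iff.mpr le_rfl)
        have e2 : i.castSucc.succAbove i = i.succ :=
          Fin.succAbove_of_le_castSucc _ _ le_rfl
        have lhs : (Fin.insertNth i.succ j0 J : Fin (m+1) → Fin n) i.castSucc = J i := by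
          conv_lhs => rw [← e1]
          exact @Fin.insertNth_apply_succAbove m (fun _ => Fin n) i.succ j0 J i
        have rhs : (Fin.insertNth i.castSucc j0 J ∘ Equiv.swap i.castSucc i.succ) i.castSucc
            = J i := by
          rw [Function.comp_apply, Equiv.swap_apply_left]
          conv_lhs => rw [← e2]
          exact @Fin.insertNth_apply_succAbove m (fun _ => Fin n) i.castSucc j0 J i
        rw [lhs, rhs]
      · by_cases h2 : q = i.succ
        · subst h2
          rw [Fin.insertNth_apply_same, Function.comp_apply, Equiv.swap_apply_right,
            Fin.insertNth_apply_same]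
        · obtain ⟨r, hr⟩ := Fin.exists_succAbove_eq h2
          have hri : r ≠ i := fun h => h1 (by
            rw [← hr, h, Fin.succAbove_of_castSucc_lt _ _ (Fin.castSucc_lt_succ_iff.mpr le_rfl)])
          rw [Function.comp_apply, Equiv.swap_apply_of_ne_of_ne h1 h2, ← hr]
          rw [Fin.insertNth_apply_succAbove]
          rw [← succAbove_castSucc_eq_succ i r hri]
          rw [Fin.insertNth_apply_succAbove]
    rw [hkey, hG, ih]
    rw [Fin.val_succ, Fin.coe_castSucc, pow_succ]
    ring

end Comb
section CombMain

variable {n p : ℕ}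

lemma comb_main (β : Fin n → (Fin (p+1) → Fin n) → ℝ)
    (hβ : ∀ (j : Fin n) (J : Fin (p+1) → Fin n) (a b : Fin (p+1)), a ≠ b →
      β j (J ∘ Equiv.swap a b) = -β j J) :
    ∑ M : Fin (p+2) → Fin n, (gD β M)^2
      = ((p:ℝ)+2) * (∑ j : Fin n, ∑ J : Fin (p+1) → Fin n, (β j J)^2)
        - ((p:ℝ)+2) * ((p:ℝ)+1) * ∑ j : Fin n, ∑ m : Fin n, ∑ K : Fin p → Fin n,
            β j (Fin.cons m K) * β m (Fin.cons j K) := by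
  have hmoveG : ∀ (c : Fin (p+2)) (j : Fin n) (J : Fin (p+1) → Fin n),
      gD β (Fin.insertNth c j J) = (-1:ℝ)^(c:ℕ) * gD β (Fin.cons j J) :=
    fun c j J => insert_move (gD β) (fun N a => gD_swap_adj β hβ N a) c j J
  have hmoveβ : ∀ (j : Fin n) (c : Fin (p+1)) (m : Fin n) (K : Fin p → Fin n),
      β j (Fin.insertNth c m K) = (-1:ℝ)^(c:ℕ) * β j (Fin.cons m K) :=
    fun j c m K => insert_move (β j)
      (fun N a => hβ j N a.castSucc a.succ (Fin.castSucc_lt_succ_iff.mpr le_rfl).ne) c m K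
  -- C2
  have hC2 : ∑ M : Fin (p+2) → Fin n, (gD β M)^2
      = ((p:ℝ)+2) * ∑ j : Fin n, ∑ J : Fin (p+1) → Fin n, gD β (Fin.cons j J) * β j J := by
    have step1 : ∑ M : Fin (p+2) → Fin n, (gD β M)^2
        = ∑ k : Fin (p+2), ∑ M : Fin (p+2) → Fin n,
            gD β M * ((-1:ℝ)^(k:ℕ) * β (M k) (M ∘ k.succAbove)) := by
      rw [Finset.sum_comm]
      refine Finset.sum_congr rfl fun M _ => ?_
      rw [sq]
      calc gD β M * gD β M
          = gD β M * ∑ k : Fin (p+2), (-1:ℝ)^(k:ℕ) * β (M k) (M ∘ k.succAbove) := rfl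
        _ = ∑ k : Fin (p+2), gD β M * ((-1:ℝ)^(k:ℕ) * β (M k) (M ∘ k.succAbove)) :=
            Finset.mul_sum _ _ _
    have step2 : ∀ k : Fin (p+2),
        (∑ M : Fin (p+2) → Fin n, gD β M * ((-1:ℝ)^(k:ℕ) * β (M k) (M ∘ k.succAbove)))
        = ∑ j : Fin n, ∑ J : Fin (p+1) → Fin n, gD β (Fin.cons j J) * β j J := by
      intro k
      rw [← Equiv.sum_comp (Fin.insertNthEquiv (fun _ => Fin n) k)
        (fun M => gD β M * ((-1:ℝ)^(k:ℕ) * β (M k) (M ∘ k.succAbove)))]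
      rw [Fintype.sum_prod_type]
      refine Finset.sum_congr rfl fun j _ => Finset.sum_congr rfl fun J _ => ?_
      have e1 : (Fin.insertNthEquiv (fun _ => Fin n) k) (j, J) = Fin.insertNth k j J := rfl
      have e2 : (Fin.insertNth k j J : Fin (p+2) → Fin n) k = j :=
        @Fin.insertNth_apply_same (p+1) (fun _ => Fin n) k j J
      have e3 : (Fin.insertNth k j J : Fin (p+2) → Fin n) ∘ k.succAbove = J :=
        funext fun i => @Fin.insertNth_apply_succAbove (p+1) (fun _ => Fin n) k j J i
      show gD β ((Fin.insertNthEquiv (fun _ => Fin n) k) (j, J))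
          * ((-1:ℝ)^(k:ℕ) * β (((Fin.insertNthEquiv (fun _ => Fin n) k) (j, J)) k)
            (((Fin.insertNthEquiv (fun _ => Fin n) k) (j, J)) ∘ k.succAbove))
          = gD β (Fin.cons j J) * β j J
      rw [e1, e2, e3, hmoveG k j J]
      have h11 : ((-1:ℝ))^(k:ℕ) * ((-1:ℝ))^(k:ℕ) = 1 := by
        rw [← mul_pow]; norm_num
      linear_combination (gD β (Fin.cons j J) * β j J) * h11
    rw [step1]
    rw [Finset.sum_congr rfl (fun k _ => step2 k)]
    rw [Finset.sum_const, Finset.card_univ, Fintype.card_fin, nsmul_eq_mul]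
    push_cast
    ring
  -- C3
  have hC3 : ∀ (j : Fin n) (J : Fin (p+1) → Fin n),
      gD β (Fin.cons j J) = β j J + ∑ i : Fin (p+1),
        (-1:ℝ)^((i:ℕ)+1) * β (J i) (Fin.cons j (J ∘ i.succAbove)) := by
    intro j J
    show (∑ k : Fin (p+2), (-1:ℝ)^(k:ℕ)
        * β ((Fin.cons j J : Fin (p+2) → Fin n) k)
          ((Fin.cons j J : Fin (p+2) → Fin n) ∘ k.succAbove)) = _
    rw [Fin.sum_univ_succ]
    congr 1
    · have h0 : (Fin.cons j J : Fin (p+2) → Fin n) ∘ (0 : Fin (p+2)).succAbove = J := by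
        funext i
        rw [Function.comp_apply, Fin.succAbove_zero, Fin.cons_succ]
      rw [h0]
      simp
    · refine Finset.sum_congr rfl fun i _ => ?_
      have h1 : (Fin.cons j J : Fin (p+2) → Fin n) i.succ = J i :=
        @Fin.cons_succ (p+1) (fun _ => Fin n) j J i
      have h2 : (Fin.cons j J : Fin (p+2) → Fin n) ∘ (i.succ).succAbove
          = Fin.cons j (J ∘ i.succAbove) := by
        funext q
        refine Fin.cases ?_ (fun r => ?_) q
        · rw [Function.comp_apply, Fin.succ_succAbove_zero, Fin.cons_zero, Fin.cons_zero]
        · rw [Function.comp_apply, Fin.succ_succAbove_succ, Fin.cons_succ, Fin.cons_succ,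
            Function.comp_apply]
      rw [h1, h2, Fin.val_succ]
  -- C4
  have hC4 : ∑ j : Fin n, ∑ J : Fin (p+1) → Fin n, gD β (Fin.cons j J) * β j J
      = (∑ j : Fin n, ∑ J : Fin (p+1) → Fin n, (β j J)^2)
        - ((p:ℝ)+1) * ∑ j : Fin n, ∑ m : Fin n, ∑ K : Fin p → Fin n,
            β j (Fin.cons m K) * β m (Fin.cons j K) := by
    have expand : ∀ (j : Fin n) (J : Fin (p+1) → Fin n),
        gD β (Fin.cons j J) * β j J
        = (β j J)^2 + ∑ i : Fin (p+1),
            (-1:ℝ)^((i:ℕ)+1) * (β (J i) (Fin.cons j (J ∘ i.succAbove)) * β j J) := by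
      intro j J
      rw [hC3 j J, add_mul, Finset.sum_mul]
      congr 1
      · rw [sq]
      · exact Finset.sum_congr rfl fun i _ => mul_assoc _ _ _
    have cross : ∀ i : Fin (p+1),
        (∑ j : Fin n, ∑ J : Fin (p+1) → Fin n,
          (-1:ℝ)^((i:ℕ)+1) * (β (J i) (Fin.cons j (J ∘ i.succAbove)) * β j J))
        = - ∑ j : Fin n, ∑ m : Fin n, ∑ K : Fin p → Fin n,
            β j (Fin.cons m K) * β m (Fin.cons j K) := by
      intro i
      rw [← Finset.sum_neg_distrib]
      refine Finset.sum_congr rfl fun j _ => ?_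
      rw [← Equiv.sum_comp (Fin.insertNthEquiv (fun _ => Fin n) i)
        (fun J => (-1:ℝ)^((i:ℕ)+1) * (β (J i) (Fin.cons j (J ∘ i.succAbove)) * β j J))]
      rw [Fintype.sum_prod_type, ← Finset.sum_neg_distrib]
      refine Finset.sum_congr rfl fun m _ => ?_
      rw [← Finset.sum_neg_distrib]
      refine Finset.sum_congr rfl fun K _ => ?_
      have e1 : (Fin.insertNthEquiv (fun _ => Fin n) i) (m, K) = Fin.insertNth i m K := rfl
      have e2 : (Fin.insertNth i m K : Fin (p+1) → Fin n) i = m :=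
        @Fin.insertNth_apply_same p (fun _ => Fin n) i m K
      have e3 : (Fin.insertNth i m K : Fin (p+1) → Fin n) ∘ i.succAbove = K :=
        funext fun r => @Fin.insertNth_apply_succAbove p (fun _ => Fin n) i m K r
      show (-1:ℝ)^((i:ℕ)+1)
          * (β (((Fin.insertNthEquiv (fun _ => Fin n) i) (m, K)) i)
              (Fin.cons j (((Fin.insertNthEquiv (fun _ => Fin n) i) (m, K)) ∘ i.succAbove))
            * β j ((Fin.insertNthEquiv (fun _ => Fin n) i) (m, K)))
          = -(β j (Fin.cons m K) * β m (Fin.cons j K))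
      rw [e1, e2, e3, hmoveβ j i m K]
      have h11 : ((-1:ℝ))^((i:ℕ)) * ((-1:ℝ))^((i:ℕ)) = 1 := by
        rw [← mul_pow]; norm_num
      rw [pow_succ]
      linear_combination (- β m (Fin.cons j K) * β j (Fin.cons m K)) * h11
    calc ∑ j : Fin n, ∑ J : Fin (p+1) → Fin n, gD β (Fin.cons j J) * β j J
        = ∑ j : Fin n, ∑ J : Fin (p+1) → Fin n, ((β j J)^2 + ∑ i : Fin (p+1),
            (-1:ℝ)^((i:ℕ)+1) * (β (J i) (Fin.cons j (J ∘ i.succAbove)) * β j J)) :=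
          Finset.sum_congr rfl fun j _ => Finset.sum_congr rfl fun J _ => expand j J
      _ = (∑ j : Fin n, ∑ J : Fin (p+1) → Fin n, (β j J)^2)
          + ∑ j : Fin n, ∑ J : Fin (p+1) → Fin n, ∑ i : Fin (p+1),
            (-1:ℝ)^((i:ℕ)+1) * (β (J i) (Fin.cons j (J ∘ i.succAbove)) * β j J) := by
          rw [← Finset.sum_add_distrib]
          exact Finset.sum_congr rfl fun j _ => Finset.sum_add_distrib
      _ = (∑ j : Fin n, ∑ J : Fin (p+1) → Fin n, (β j J)^2)
          + ∑ i : Fin (p+1), ∑ j : Fin n, ∑ J : Fin (p+1) → Fin n,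
            (-1:ℝ)^((i:ℕ)+1) * (β (J i) (Fin.cons j (J ∘ i.succAbove)) * β j J) := by
          congr 1
          have h1 : ∀ j : Fin n, (∑ J : Fin (p+1) → Fin n, ∑ i : Fin (p+1),
              (-1:ℝ)^((i:ℕ)+1) * (β (J i) (Fin.cons j (J ∘ i.succAbove)) * β j J))
              = ∑ i : Fin (p+1), ∑ J : Fin (p+1) → Fin n,
                (-1:ℝ)^((i:ℕ)+1) * (β (J i) (Fin.cons j (J ∘ i.succAbove)) * β j J) :=
            fun j => Finset.sum_comm
          rw [Finset.sum_congr rfl fun j _ => h1 j]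
          exact Finset.sum_comm
      _ = (∑ j : Fin n, ∑ J : Fin (p+1) → Fin n, (β j J)^2)
          + ∑ i : Fin (p+1), -(∑ j : Fin n, ∑ m : Fin n, ∑ K : Fin p → Fin n,
              β j (Fin.cons m K) * β m (Fin.cons j K)) := by
          congr 1
          exact Finset.sum_congr rfl fun i _ => cross i
      _ = _ := by
          rw [Finset.sum_const, Finset.card_univ, Fintype.card_fin, nsmul_eq_mul]
          push_cast
          ring
  rw [hC2, hC4]
  ring

end CombMain
section Translate

variable {n p : ℕ}

lemma alt_swap_pd (α : Form n (p+1)) (hα : IsAlt α) (x : Rn n) :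
    ∀ (j : Fin n) (J : Fin (p+1) → Fin n) (a b : Fin (p+1)), a ≠ b →
      pd j (α (J ∘ Equiv.swap a b)) x = -(pd j (α J) x) := by
  intro j J a b hab
  have h1 : α (J ∘ Equiv.swap a b) = fun y => -(α J y) := by
    funext y
    rw [hα (Equiv.swap a b) J y, Equiv.Perm.sign_swap hab]
    norm_num
  rw [h1, pd_neg]

lemma normSq_dC_eq (α : Form n (p+1)) (hα : IsAlt α) (x : Rn n) :
    normSq (dC α) x
      = ((Nat.factorial (p+1) : ℝ))⁻¹
          * (∑ j : Fin n, ∑ J : Fin (p+1) → Fin n, (pd j (α J) x)^2)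
        - ((Nat.factorial p : ℝ))⁻¹ * ∑ K : Fin p → Fin n, ∑ j : Fin n, ∑ k : Fin n,
            pd k (α (Fin.cons j K)) x * pd j (α (Fin.cons k K)) x := by
  set β : Fin n → (Fin (p+1) → Fin n) → ℝ := fun j J => pd j (α J) x with hβdef
  have hβ : ∀ (j : Fin n) (J : Fin (p+1) → Fin n) (a b : Fin (p+1)), a ≠ b →
      β j (J ∘ Equiv.swap a b) = -β j J := fun j J a b hab => alt_swap_pd α hα x j J a b hab
  have key := comb_main β hβ
  have h0 : normSq (dC α) x
      = ((Nat.factorial (p+2) : ℝ))⁻¹ * ∑ M : Fin (p+2) → Fin n, (gD β M)^2 := rfl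
  -- reorder the cross sum
  have hreord : (∑ j : Fin n, ∑ m : Fin n, ∑ K : Fin p → Fin n,
        β j (Fin.cons m K) * β m (Fin.cons j K))
      = ∑ K : Fin p → Fin n, ∑ j : Fin n, ∑ k : Fin n,
          pd k (α (Fin.cons j K)) x * pd j (α (Fin.cons k K)) x := by
    have s1 : ∀ j : Fin n, (∑ m : Fin n, ∑ K : Fin p → Fin n,
        β j (Fin.cons m K) * β m (Fin.cons j K))
        = ∑ K : Fin p → Fin n, ∑ m : Fin n,
            β j (Fin.cons m K) * β m (Fin.cons j K) := fun j => Finset.sum_comm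
    rw [Finset.sum_congr rfl fun j _ => s1 j, Finset.sum_comm]
    refine Finset.sum_congr rfl fun K _ => ?_
    exact Finset.sum_comm
  have fp2 : ((Nat.factorial (p+2) : ℝ)) = ((p:ℝ)+2) * ((p:ℝ)+1) * (Nat.factorial p : ℝ) := by
    rw [Nat.factorial_succ, Nat.factorial_succ]
    push_cast
    ring
  have fp1 : ((Nat.factorial (p+1) : ℝ)) = ((p:ℝ)+1) * (Nat.factorial p : ℝ) := by
    rw [Nat.factorial_succ]
    push_cast
    ring
  have hp0 : (Nat.factorial p : ℝ) ≠ 0 := Nat.cast_ne_zero.mpr (Nat.factorial_ne_zero p)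
  have hp1 : ((p:ℝ)+1) ≠ 0 := by positivity
  have hp2 : ((p:ℝ)+2) ≠ 0 := by positivity
  rw [h0, key, hreord, fp2, fp1]
  field_simp
  ring

end Translate
section Assemble

variable {n : ℕ}

lemma int_sum_c {ι : Type*} [Fintype ι] (c : ℝ) (f : ι → Rn n → ℝ)
    (hc : ∀ i, Continuous (f i)) (hs : ∀ i, HasCompactSupport (f i)) :
    ∫ x, c * ∑ i, f i x = c * ∑ i, ∫ x, f i x := by
  rw [MeasureTheory.integral_const_mul,
    integral_finset_sum Finset.univ (fun i _ => integ_cc (hc i) (hs i))]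

lemma intble_sum_c {ι : Type*} [Fintype ι] (c : ℝ) (f : ι → Rn n → ℝ)
    (hc : ∀ i, Continuous (f i)) (hs : ∀ i, HasCompactSupport (f i)) :
    Integrable (fun x => c * ∑ i, f i x) :=
  (integrable_finset_sum Finset.univ (fun i _ => integ_cc (hc i) (hs i))).const_mul c

end Assemble

theorem stmt3' {n p : ℕ} (φ : Rn n → ℝ) (hφ : ContDiff ℝ (⊤ : ℕ∞) φ) (c : ℝ) (hc : 0 < c)
    (hconv : ∀ (x : Rn n) (ω : Fin n → ℝ),
      c * (∑ j : Fin n, (ω j) ^ 2) ≤ ∑ j : Fin n, ∑ k : Fin n, pd j (pd k φ) x * ω j * ω k)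
    (α : Form n (p + 1)) (hα : IsAlt α) (hsm : IsSmoothC α) :
    c * ((p : ℝ) + 1) * norm2F φ α ≤ norm2F φ (Tstar φ α) + norm2F φ (dC α) := by
  classical
  set E : Rn n → ℝ := fun x => Real.exp (-(φ x)) with hEdef
  have hEc : Continuous E := Real.continuous_exp.comp (hφ.continuous.neg)
  have hEnn : ∀ x, 0 ≤ E x := fun x => le_of_lt (Real.exp_pos _)
  have hsmJ : ∀ J, ContDiff ℝ (⊤ : ℕ∞) (α J) := fun J => (hsm J).1
  have hcsJ : ∀ J, HasCompactSupport (α J) := fun J => (hsm J).2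
  have hp0 : (Nat.factorial p : ℝ) ≠ 0 := Nat.cast_ne_zero.mpr (Nat.factorial_ne_zero p)
  have hp0' : (0:ℝ) ≤ (Nat.factorial p : ℝ)⁻¹ := by positivity
  have hp1 : ((p:ℝ)+1) ≠ 0 := by positivity
  have fp1 : ((Nat.factorial (p+1) : ℝ)) = ((p:ℝ)+1) * (Nat.factorial p : ℝ) := by
    rw [Nat.factorial_succ]; push_cast; ring
  -- families of integrands
  set fT : ((Fin p → Fin n) × Fin n × Fin n) → Rn n → ℝ := fun q x =>
    dsF φ q.2.1 (α (Fin.cons q.2.1 q.1)) x * dsF φ q.2.2 (α (Fin.cons q.2.2 q.1)) x * E x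
    with hfT
  set fH : ((Fin p → Fin n) × Fin n × Fin n) → Rn n → ℝ := fun q x =>
    pd q.2.2 (pd q.2.1 φ) x * (α (Fin.cons q.2.1 q.1) x * α (Fin.cons q.2.2 q.1) x) * E x
    with hfH
  set fX : ((Fin p → Fin n) × Fin n × Fin n) → Rn n → ℝ := fun q x =>
    pd q.2.2 (α (Fin.cons q.2.1 q.1)) x * pd q.2.1 (α (Fin.cons q.2.2 q.1)) x * E x
    with hfX
  set fG : (Fin n × (Fin (p+1) → Fin n)) → Rn n → ℝ := fun q x =>
    pd q.1 (α q.2) x * pd q.1 (α q.2) x * E x with hfG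
  set fN : (Fin (p+1) → Fin n) → Rn n → ℝ := fun J x => α J x * α J x * E x with hfN
  -- continuity and compact support of all families
  have hfTc : ∀ q, Continuous (fT q) := fun q =>
    (((contDiff_dsF hφ (hsmJ _) q.2.1).continuous).mul
      ((contDiff_dsF hφ (hsmJ _) q.2.2).continuous)).mul hEc
  have hfTs : ∀ q, HasCompactSupport (fT q) := fun q =>
    ((hcs_dsF φ (hcsJ _) q.2.1).mul_right).mul_right
  have hfHc : ∀ q, Continuous (fH q) := fun q =>
    ((continuous_pd (contDiff_pd hφ q.2.1) q.2.2).mul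
      ((hsmJ _).continuous.mul (hsmJ _).continuous)).mul hEc
  have hfHs : ∀ q, HasCompactSupport (fH q) := fun q =>
    (((hcsJ _).mul_right).mul_left).mul_right
  have hfXc : ∀ q, Continuous (fX q) := fun q =>
    ((continuous_pd (hsmJ _) q.2.2).mul (continuous_pd (hsmJ _) q.2.1)).mul hEc
  have hfXs : ∀ q, HasCompactSupport (fX q) := fun q =>
    ((hcs_pd (hcsJ _) q.2.2).mul_right).mul_right
  have hfGc : ∀ q, Continuous (fG q) := fun q =>
    ((continuous_pd (hsmJ _) q.1).mul (continuous_pd (hsmJ _) q.1)).mul hEc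
  have hfGs : ∀ q, HasCompactSupport (fG q) := fun q =>
    ((hcs_pd (hcsJ _) q.1).mul_right).mul_right
  have hfNc : ∀ J, Continuous (fN J) := fun J =>
    ((hsmJ _).continuous.mul (hsmJ _).continuous).mul hEc
  have hfNs : ∀ J, HasCompactSupport (fN J) := fun J => ((hcsJ _).mul_right).mul_right
  have hns : ∀ x, normSq α x
      = ((Nat.factorial (p+1) : ℝ))⁻¹ * ∑ J : Fin (p+1) → Fin n, (α J x)^2 := fun x => rfl
  -- (1) : Tstar identity
  have e1 : norm2F φ (Tstar φ α)
      = ((Nat.factorial p : ℝ))⁻¹ * ((∑ q, ∫ x, fH q x) + ∑ q, ∫ x, fX q x) := by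
    have h0 : norm2F φ (Tstar φ α) = ∫ x, normSq (Tstar φ α) x * E x := rfl
    have hpt : (fun x => normSq (Tstar φ α) x * E x)
        = fun x => ((Nat.factorial p : ℝ))⁻¹
            * ∑ q : ((Fin p → Fin n) × Fin n × Fin n), fT q x := by
      funext x
      have hsum : ∑ q : ((Fin p → Fin n) × Fin n × Fin n), fT q x
          = ∑ K : Fin p → Fin n, (Tstar φ α K x)^2 * E x := by
        rw [Fintype.sum_prod_type]
        refine Finset.sum_congr rfl fun K _ => ?_
        rw [Fintype.sum_prod_type]
        have hT : Tstar φ α K x = ∑ j : Fin n, dsF φ j (α (Fin.cons j K)) x := rfl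
        rw [hT, sq, Finset.sum_mul_sum, Finset.sum_mul]
        refine Finset.sum_congr rfl fun j _ => ?_
        rw [Finset.sum_mul]
      rw [hsum]
      have hns2 : normSq (Tstar φ α) x
          = ((Nat.factorial p : ℝ))⁻¹ * ∑ K : Fin p → Fin n, (Tstar φ α K x)^2 := rfl
      rw [hns2, ← Finset.sum_mul]
      ring
    rw [h0, hpt, int_sum_c _ _ hfTc hfTs]
    congr 1
    rw [← Finset.sum_add_distrib]
    refine Finset.sum_congr rfl fun q _ => ?_
    exact ibp_pair φ hφ (hsmJ _) (hcsJ _) (hsmJ _) (hcsJ _) q.2.1 q.2.2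
  -- (2) : dC identity
  have e2 : norm2F φ (dC α)
      = ((Nat.factorial (p+1) : ℝ))⁻¹ * (∑ q, ∫ x, fG q x)
        - ((Nat.factorial p : ℝ))⁻¹ * ∑ q, ∫ x, fX q x := by
    have h0 : norm2F φ (dC α) = ∫ x, normSq (dC α) x * E x := rfl
    have hpt : (fun x => normSq (dC α) x * E x)
        = fun x => ((Nat.factorial (p+1) : ℝ))⁻¹
              * (∑ q : Fin n × (Fin (p+1) → Fin n), fG q x)
            - ((Nat.factorial p : ℝ))⁻¹
              * ∑ q : ((Fin p → Fin n) × Fin n × Fin n), fX q x := by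
      funext x
      rw [normSq_dC_eq α hα x]
      have hA : ∑ q : Fin n × (Fin (p+1) → Fin n), fG q x
          = (∑ j : Fin n, ∑ J : Fin (p+1) → Fin n, (pd j (α J) x)^2) * E x := by
        rw [Fintype.sum_prod_type, Finset.sum_mul]
        refine Finset.sum_congr rfl fun j _ => ?_
        rw [Finset.sum_mul]
        refine Finset.sum_congr rfl fun J _ => ?_
        rw [sq]
      have hB : ∑ q : ((Fin p → Fin n) × Fin n × Fin n), fX q x
          = (∑ K : Fin p → Fin n, ∑ j : Fin n, ∑ k : Fin n,
              pd k (α (Fin.cons j K)) x * pd j (α (Fin.cons k K)) x) * E x := by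
        rw [Fintype.sum_prod_type, Finset.sum_mul]
        refine Finset.sum_congr rfl fun K _ => ?_
        rw [Fintype.sum_prod_type, Finset.sum_mul]
        refine Finset.sum_congr rfl fun j _ => ?_
        rw [Finset.sum_mul]
      rw [hA, hB]
      ring
    rw [h0, hpt, integral_sub (intble_sum_c _ _ hfGc hfGs) (intble_sum_c _ _ hfXc hfXs),
      int_sum_c _ _ hfGc hfGs, int_sum_c _ _ hfXc hfXs]
  -- (3) : nonnegativity of the gradient term
  have e3 : 0 ≤ ((Nat.factorial (p+1) : ℝ))⁻¹ * ∑ q, ∫ x, fG q x := by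
    apply mul_nonneg (by positivity)
    apply Finset.sum_nonneg
    intro q _
    apply integral_nonneg
    intro x
    exact mul_nonneg (mul_self_nonneg _) (hEnn x)
  -- (4) : the Hessian term dominates
  have e4 : c * ((p:ℝ)+1) * norm2F φ α ≤ ((Nat.factorial p : ℝ))⁻¹ * ∑ q, ∫ x, fH q x := by
    have hR : ((Nat.factorial p : ℝ))⁻¹ * ∑ q, ∫ x, fH q x
        = ∫ x, ((Nat.factorial p : ℝ))⁻¹ * ∑ q, fH q x :=
      (int_sum_c _ _ hfHc hfHs).symm
    have h0 : norm2F φ α = ∫ x, normSq α x * E x := rfl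
    have hL : c * ((p:ℝ)+1) * norm2F φ α
        = ∫ x, c * ((p:ℝ)+1) * (normSq α x * E x) := by
      rw [h0]; exact (MeasureTheory.integral_const_mul _ _).symm
    rw [hL, hR]
    have hNint : Integrable (fun x => normSq α x * E x) := by
      have heq : (fun x => normSq α x * E x)
          = fun x => ((Nat.factorial (p+1) : ℝ))⁻¹ * ∑ J : Fin (p+1) → Fin n, fN J x := by
        funext x
        rw [hns x, mul_assoc, Finset.sum_mul]
        congr 1
        refine Finset.sum_congr rfl fun J _ => ?_
        rw [sq]
      rw [heq]
      exact intble_sum_c _ _ hfNc hfNs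
    apply integral_mono (hNint.const_mul _) (intble_sum_c _ _ hfHc hfHs)
    intro x
    have hRx : ((Nat.factorial p : ℝ))⁻¹ * ∑ q, fH q x
        = ((Nat.factorial p : ℝ))⁻¹ * ∑ K : Fin p → Fin n,
            (∑ j : Fin n, ∑ k : Fin n,
              pd k (pd j φ) x * (α (Fin.cons j K) x * α (Fin.cons k K) x)) * E x := by
      congr 1
      rw [Fintype.sum_prod_type]
      refine Finset.sum_congr rfl fun K _ => ?_
      rw [Fintype.sum_prod_type, Finset.sum_mul]
      refine Finset.sum_congr rfl fun j _ => ?_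
      rw [Finset.sum_mul]
    have hKb : ∀ K : Fin p → Fin n, c * (∑ j : Fin n, (α (Fin.cons j K) x)^2)
        ≤ ∑ j : Fin n, ∑ k : Fin n,
            pd k (pd j φ) x * (α (Fin.cons j K) x * α (Fin.cons k K) x) := by
      intro K
      have h := hconv x (fun j => α (Fin.cons j K) x)
      have hcm : (∑ j : Fin n, ∑ k : Fin n,
          pd k (pd j φ) x * (α (Fin.cons j K) x * α (Fin.cons k K) x))
          = ∑ j : Fin n, ∑ k : Fin n,
            pd j (pd k φ) x * α (Fin.cons j K) x * α (Fin.cons k K) x := by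
        rw [Finset.sum_comm]
        refine Finset.sum_congr rfl fun a _ => Finset.sum_congr rfl fun b _ => ?_
        ring
      rw [hcm]
      exact h
    have hLx : c * ((p:ℝ)+1) * (normSq α x * E x)
        = ((Nat.factorial p : ℝ))⁻¹ * ∑ K : Fin p → Fin n,
            (c * ∑ j : Fin n, (α (Fin.cons j K) x)^2) * E x := by
      have hconsum : ∑ J : Fin (p+1) → Fin n, (α J x)^2
          = ∑ K : Fin p → Fin n, ∑ j : Fin n, (α (Fin.cons j K) x)^2 := by
        rw [← Equiv.sum_comp (Fin.consEquiv (fun _ => Fin n)) (fun J => (α J x)^2),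
          Fintype.sum_prod_type]
        exact Finset.sum_comm
      rw [hns x, hconsum]
      rw [show (∑ K : Fin p → Fin n, (c * ∑ j : Fin n, (α (Fin.cons j K) x)^2) * E x)
        = (∑ K : Fin p → Fin n, c * ∑ j : Fin n, (α (Fin.cons j K) x)^2) * E x from
          (Finset.sum_mul _ _ _).symm]
      rw [← Finset.mul_sum, fp1]
      field_simp
    show c * ((p:ℝ)+1) * (normSq α x * E x)
        ≤ ((Nat.factorial p : ℝ))⁻¹ * ∑ q, fH q x
    rw [hLx, hRx]
    apply mul_le_mul_of_nonneg_left ?_ hp0'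
    apply Finset.sum_le_sum
    intro K _
    exact mul_le_mul_of_nonneg_right (hKb K) (hEnn x)
  linarith [e1, e2, e3, e4]

/-- if the Hessian of `φ` is bounded below by `c > 0`, then
`‖T*α‖² + ‖dα‖² ≥ c(p+1)‖α‖²` for smooth compactly supported `(p+1)`-forms. -/
theorem stmt3 {n p : ℕ} (φ : Rn n → ℝ) (hφ : ContDiff ℝ (⊤ : ℕ∞) φ) (c : ℝ) (hc : 0 < c)
    (hconv : ∀ (x : Rn n) (ω : Fin n → ℝ),
      c * (∑ j : Fin n, (ω j) ^ 2) ≤ ∑ j : Fin n, ∑ k : Fin n, pd j (pd k φ) x * ω j * ω k)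
    (α : Form n (p + 1)) (hα : IsAlt α) (hsm : IsSmoothC α) :
    c * ((p : ℝ) + 1) * norm2F φ α ≤ norm2F φ (Tstar φ α) + norm2F φ (dC α) := by
  exact stmt3' φ hφ c hc hconv α hα hsm
end
end

section
/- Let φ be smooth on ℝⁿ, T the distributional exterior derivative L²_p(e^{-φ}) → L²_{p+1}(e^{-φ}), T* its Hilbert adjoint, and η_ν the standard radial cutoffs with |dη_ν|² ≤ 4n. If f ∈ Dom(T*), then η_ν f ∈ Dom(T*) and T*(η_ν f) → T*f in L²_p(ℝⁿ, e^{-φ}). -/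
open MeasureTheory Filter Topology

noncomputable section

variable {n : ℕ}

namespace Stmt14

variable {n p : ℕ}

/-- weight -/
def w (φ : Rn n → ℝ) (x : Rn n) : ℝ := Real.exp (-(φ x))

lemma w_pos (φ : Rn n → ℝ) (x : Rn n) : 0 < w φ x := Real.exp_pos _

lemma w_nonneg (φ : Rn n → ℝ) (x : Rn n) : 0 ≤ w φ x := (w_pos φ x).le

lemma w_cont {φ : Rn n → ℝ} (hφ : Continuous φ) : Continuous (w φ) :=
  Real.continuous_exp.comp hφ.neg

lemma normSq_nonneg {α : Form n p} (x : Rn n) : 0 ≤ normSq α x := by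
  unfold normSq; positivity

lemma sq_le_fact_normSq (α : Form n p) (J : Fin p → Fin n) (x : Rn n) :
    (α J x) ^ 2 ≤ (Nat.factorial p : ℝ) * normSq α x := by
  unfold normSq
  rw [← mul_assoc, mul_inv_cancel₀ (by positivity : (Nat.factorial p : ℝ) ≠ 0), one_mul]
  exact Finset.single_le_sum (f := fun J => (α J x) ^ 2) (fun _ _ => sq_nonneg _)
    (Finset.mem_univ J)

variable {φ : Rn n → ℝ}

lemma aesm_w (hφ : Continuous φ) : AEStronglyMeasurable (w φ) volume :=
  (w_cont hφ).aestronglyMeasurable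

lemma integrable_coeff_sq (hφ : Continuous φ) {α : Form n p} (hα : MemL2F φ α)
    (J : Fin p → Fin n) : Integrable (fun x => (α J x) ^ 2 * w φ x) := by
  refine Integrable.mono' (hα.2.const_mul (Nat.factorial p : ℝ)) ?_ ?_
  · exact ((hα.1 J).pow 2).mul (aesm_w hφ)
  · refine Filter.Eventually.of_forall fun x => ?_
    rw [Real.norm_eq_abs, abs_of_nonneg (mul_nonneg (sq_nonneg _) (w_nonneg φ x))]
    have := sq_le_fact_normSq α J x
    have hw := w_nonneg φ x
    unfold w
    calc (α J x)^2 * Real.exp (-(φ x)) ≤ ((Nat.factorial p : ℝ) * normSq α x) * Real.exp (-(φ x)) := by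
          exact mul_le_mul_of_nonneg_right this (Real.exp_nonneg _)
      _ = (Nat.factorial p : ℝ) * (normSq α x * Real.exp (-(φ x))) := by ring

lemma integrable_mul_weight (hφ : Continuous φ) {a b : Rn n → ℝ} (ha : AEStronglyMeasurable a volume)
    (hb : AEStronglyMeasurable b volume)
    (ha2 : Integrable (fun x => (a x) ^ 2 * w φ x))
    (hb2 : Integrable (fun x => (b x) ^ 2 * w φ x)) :
    Integrable (fun x => a x * b x * w φ x) := by
  refine Integrable.mono' ((ha2.add hb2).const_mul (1/2 : ℝ)) ?_ ?_
  · exact (ha.mul hb).mul (aesm_w hφ)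
  · refine Filter.Eventually.of_forall fun x => ?_
    have hw := w_nonneg φ x
    simp only [Pi.add_apply, Real.norm_eq_abs]
    rw [abs_mul, abs_of_nonneg hw]
    have h1 : |a x * b x| ≤ (1/2) * ((a x)^2 + (b x)^2) := by
      rw [abs_mul]; nlinarith [sq_nonneg (|a x| - |b x|), sq_abs (a x), sq_abs (b x),
        abs_nonneg (a x), abs_nonneg (b x)]
    calc |a x * b x| * w φ x ≤ ((1/2) * ((a x)^2 + (b x)^2)) * w φ x :=
          mul_le_mul_of_nonneg_right h1 hw
      _ = 1/2 * ((a x)^2 * w φ x + (b x)^2 * w φ x) := by ring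

lemma memL2F_of_coeffs (hφ : Continuous φ) {α : Form n p}
    (hm : ∀ J, AEStronglyMeasurable (α J) volume)
    (hi : ∀ J, Integrable (fun x => (α J x) ^ 2 * w φ x)) : MemL2F φ α := by
  refine ⟨hm, ?_⟩
  have : (fun x => normSq α x * Real.exp (-(φ x)))
      = fun x => (Nat.factorial p : ℝ)⁻¹ * ∑ J : Fin p → Fin n, ((α J x) ^ 2 * w φ x) := by
    funext x; unfold normSq w; rw [mul_assoc, Finset.sum_mul]
  rw [this]
  exact (integrable_finset_sum _ (fun J _ => hi J)).const_mul _

lemma integrable_sq_w_sum (hφ : Continuous φ) {ι : Type*} [Fintype ι] {a : ι → Rn n → ℝ}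
    (hm : ∀ i, AEStronglyMeasurable (a i) volume)
    (hi : ∀ i, Integrable (fun x => (a i x) ^ 2 * w φ x)) :
    Integrable (fun x => (∑ i, a i x) ^ 2 * w φ x) := by
  refine Integrable.mono' (((integrable_finset_sum Finset.univ (fun i _ => hi i)).const_mul
    (Fintype.card ι : ℝ))) ?_ ?_
  · exact ((Finset.aestronglyMeasurable_fun_sum _ (fun i _ => hm i)).pow 2).mul (aesm_w hφ)
  · refine Filter.Eventually.of_forall fun x => ?_
    have hw := w_nonneg φ x
    rw [Real.norm_eq_abs, abs_of_nonneg (mul_nonneg (sq_nonneg _) hw)]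
    have h1 : (∑ i, a i x) ^ 2 ≤ (Fintype.card ι : ℝ) * ∑ i, (a i x) ^ 2 := by
      simpa using sq_sum_le_card_mul_sum_sq (s := (Finset.univ : Finset ι))
        (f := fun i => a i x)
    calc (∑ i, a i x) ^ 2 * w φ x ≤ ((Fintype.card ι : ℝ) * ∑ i, (a i x) ^ 2) * w φ x :=
          mul_le_mul_of_nonneg_right h1 hw
      _ = (Fintype.card ι : ℝ) * (∑ i, ((a i x) ^ 2 * w φ x)) := by
          rw [mul_assoc, Finset.sum_mul]

lemma integrable_sq_w_bmul (hφ : Continuous φ) {c a : Rn n → ℝ} {B : ℝ}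
    (hc : ∀ x, (c x) ^ 2 ≤ B) (hcm : AEStronglyMeasurable c volume)
    (ham : AEStronglyMeasurable a volume)
    (ha : Integrable (fun x => (a x) ^ 2 * w φ x)) :
    Integrable (fun x => (c x * a x) ^ 2 * w φ x) := by
  refine Integrable.mono' (ha.const_mul B) ?_ ?_
  · exact (((hcm.mul ham)).pow 2).mul (aesm_w hφ)
  · refine Filter.Eventually.of_forall fun x => ?_
    have hw := w_nonneg φ x
    rw [Real.norm_eq_abs, abs_of_nonneg (mul_nonneg (sq_nonneg _) hw)]
    calc (c x * a x) ^ 2 * w φ x = ((c x) ^ 2 * (a x) ^ 2) * w φ x := by ring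
      _ ≤ (B * (a x) ^ 2) * w φ x :=
          mul_le_mul_of_nonneg_right
            (mul_le_mul_of_nonneg_right (hc x) (sq_nonneg _)) hw
      _ = B * ((a x) ^ 2 * w φ x) := by ring

lemma integrable_mul_cc (hφ : Continuous φ) {a χ : Rn n → ℝ}
    (ham : AEStronglyMeasurable a volume)
    (ha : Integrable (fun x => (a x) ^ 2 * w φ x))
    (hχ : Continuous χ) (hχc : HasCompactSupport χ) :
    Integrable (fun x => a x * χ x) := by
  have hexp : Integrable (fun x => (χ x) ^ 2 * Real.exp (φ x)) := by
    refine Continuous.integrable_of_hasCompactSupport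
      (by continuity) ?_
    have e : (fun x => (χ x) ^ 2) = χ * χ := by funext x; simp [Pi.mul_apply, sq]
    have : HasCompactSupport (fun x => (χ x) ^ 2) := by rw [e]; exact hχc.mul_left
    exact this.mul_right
  refine Integrable.mono' ((ha.add hexp).const_mul (1/2 : ℝ)) (ham.mul hχ.aestronglyMeasurable) ?_
  refine Filter.Eventually.of_forall fun x => ?_
  rw [Real.norm_eq_abs, abs_mul]
  have key : |a x| * |χ x| ≤ 1/2 * ((a x)^2 * w φ x + (χ x)^2 * Real.exp (φ x)) := by
    have e1 : |a x| * |χ x| = (|a x| * Real.exp (-(φ x)/2)) * (|χ x| * Real.exp ((φ x)/2)) := by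
      rw [mul_mul_mul_comm, ← Real.exp_add]
      rw [show -φ x / 2 + φ x / 2 = 0 by ring, Real.exp_zero, mul_one]
    rw [e1]
    have h2 : ∀ u v : ℝ, 0 ≤ u → 0 ≤ v → u * v ≤ 1/2 * (u^2 + v^2) := by
      intro u v hu hv; nlinarith [sq_nonneg (u - v)]
    have := h2 (|a x| * Real.exp (-φ x / 2)) (|χ x| * Real.exp (φ x / 2))
      (mul_nonneg (abs_nonneg (a x)) (Real.exp_nonneg _))
      (mul_nonneg (abs_nonneg (χ x)) (Real.exp_nonneg _))
    refine this.trans (le_of_eq ?_)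
    have e2 : ∀ t : ℝ, Real.exp t ^ 2 = Real.exp (2 * t) := by
      intro t; rw [sq, ← Real.exp_add, two_mul]
    unfold w
    rw [mul_pow, mul_pow, sq_abs, sq_abs, e2, e2]
    ring_nf
  exact key

lemma pd_continuous {g : Rn n → ℝ} (hg : ContDiff ℝ (⊤ : ℕ∞) g) (j : Fin n) :
    Continuous (pd j g) :=
  ((hg.continuous_fderiv (by simp)).clm_apply continuous_const)

lemma pd_compactSupport {g : Rn n → ℝ} (hg : ContDiff ℝ (⊤ : ℕ∞) g)
    (hgc : HasCompactSupport g) (j : Fin n) : HasCompactSupport (pd j g) := by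
  have h1 : HasCompactSupport (fderiv ℝ g) := hgc.fderiv (𝕜 := ℝ)
  exact h1.comp_left (g := fun L : Rn n →L[ℝ] ℝ => L (EuclideanSpace.single j 1)) rfl

lemma pd_mul {a b : Rn n → ℝ} (ha : ContDiff ℝ (⊤ : ℕ∞) a) (hb : ContDiff ℝ (⊤ : ℕ∞) b) (j : Fin n)
    (x : Rn n) :
    pd j (fun y => a y * b y) x = pd j a x * b x + a x * pd j b x := by
  unfold pd
  rw [fderiv_fun_mul (ha.differentiable (by simp) x) (hb.differentiable (by simp) x)]
  simp only [ContinuousLinearMap.add_apply, ContinuousLinearMap.smul_apply, smul_eq_mul]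
  ring

lemma pd_eventually_const {g : Rn n → ℝ} {x : Rn n} {c : ℝ}
    (hg : g =ᶠ[nhds x] fun _ => c) (j : Fin n) : pd j g x = 0 := by
  unfold pd
  rw [Filter.EventuallyEq.fderiv_eq hg, fderiv_fun_const]
  simp

lemma isTest_mul {c ψ : Rn n → ℝ} (hc : ContDiff ℝ (⊤ : ℕ∞) c) (hψ : IsTest ψ) :
    IsTest (fun x => c x * ψ x) :=
  ⟨hc.mul hψ.1, hψ.2.mul_left⟩

/-- `dη ∧ u` in coordinates, with `e x j = ∂_j η (x)`. -/
def wedgeF (e : Rn n → Fin n → ℝ) (u : Form n p) : Form n (p + 1) :=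
  fun M x => ∑ k : Fin (p + 1), (-1 : ℝ) ^ (k : ℕ) * e x (M k) * u (M ∘ k.succAbove) x

/-- symmetrized contraction of `f` by `e`. -/
def sF (e : Rn n → Fin n → ℝ) (f : Form n (p + 1)) : Form n p :=
  fun I x => ((p : ℝ) + 1)⁻¹ * ∑ k : Fin (p + 1), ∑ j : Fin n,
    (-1 : ℝ) ^ (k : ℕ) * e x j * f (k.insertNth j I) x

lemma sum_insertNth (k : Fin (p + 1)) (F : (Fin (p + 1) → Fin n) → ℝ) :
    ∑ M : Fin (p + 1) → Fin n, F M
      = ∑ j : Fin n, ∑ I : Fin p → Fin n, F (k.insertNth j I) := by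
  have := Fintype.sum_equiv (Fin.insertNthEquiv (fun _ => Fin n) k)
    (fun pr : Fin n × (Fin p → Fin n) => F (k.insertNth pr.1 pr.2)) F (fun pr => rfl)
  rw [← this, Fintype.sum_prod_type]

lemma wedge_pair_pointwise (e : Rn n → Fin n → ℝ) (u : Form n p) (f : Form n (p + 1))
    (x : Rn n) :
    (Nat.factorial (p + 1) : ℝ)⁻¹ * ∑ M : Fin (p + 1) → Fin n, wedgeF e u M x * f M x
      = (Nat.factorial p : ℝ)⁻¹ * ∑ I : Fin p → Fin n, u I x * sF e f I x := by
  have key : ∑ M : Fin (p + 1) → Fin n, wedgeF e u M x * f M x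
      = ∑ k : Fin (p + 1), ∑ j : Fin n, ∑ I : Fin p → Fin n,
          (-1 : ℝ) ^ (k : ℕ) * e x j * u I x * f (k.insertNth j I) x := by
    unfold wedgeF
    simp only [Finset.sum_mul]
    rw [Finset.sum_comm]
    refine Finset.sum_congr rfl fun k _ => ?_
    rw [sum_insertNth k (fun M => (-1 : ℝ) ^ (k : ℕ) * e x (M k) * u (M ∘ k.succAbove) x * f M x)]
    refine Finset.sum_congr rfl fun j _ => Finset.sum_congr rfl fun I _ => ?_
    have h1 : (Fin.insertNth (α := fun _ => Fin n) k j I) k = j := by simp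
    have h2 : (Fin.insertNth (α := fun _ => Fin n) k j I) ∘ k.succAbove = I := by
      funext m; simp [Function.comp]
    rw [h1, h2]
  rw [key]
  unfold sF
  have hfact : (Nat.factorial (p + 1) : ℝ)⁻¹ = (Nat.factorial p : ℝ)⁻¹ * ((p : ℝ) + 1)⁻¹ := by
    rw [Nat.factorial_succ, ← mul_inv]
    push_cast
    ring_nf
  rw [hfact]
  have swap : ∀ (G : Fin (p + 1) → Fin n → (Fin p → Fin n) → ℝ),
      ∑ k : Fin (p + 1), ∑ j : Fin n, ∑ I : Fin p → Fin n, G k j I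
        = ∑ I : Fin p → Fin n, ∑ k : Fin (p + 1), ∑ j : Fin n, G k j I := by
    intro G
    calc ∑ k : Fin (p + 1), ∑ j : Fin n, ∑ I : Fin p → Fin n, G k j I
        = ∑ k : Fin (p + 1), ∑ I : Fin p → Fin n, ∑ j : Fin n, G k j I :=
          Finset.sum_congr rfl (fun k _ => Finset.sum_comm)
      _ = ∑ I : Fin p → Fin n, ∑ k : Fin (p + 1), ∑ j : Fin n, G k j I :=
          Finset.sum_comm
  simp only [Finset.mul_sum]
  rw [swap]
  refine Finset.sum_congr rfl fun I _ => Finset.sum_congr rfl fun k _ =>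
    Finset.sum_congr rfl fun j _ => ?_
  ring

lemma weakD_mul (hφ : Continuous φ) {c : Rn n → ℝ} (hc : ContDiff ℝ (⊤ : ℕ∞) c)
    {u : Form n p} {g : Form n (p + 1)} (hu : MemL2F φ u) (hg : MemL2F φ g)
    (hwd : WeakD u g) :
    WeakD (fun J y => c y * u J y)
      (fun M y => c y * g M y + wedgeF (fun x j => pd j c x) u M y) := by
  intro M ψ hψ
  have hψc : Continuous ψ := hψ.1.continuous
  have hcc : Continuous c := hc.continuous
  have hcψ : IsTest (fun x => c x * ψ x) := isTest_mul hc hψ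
  have hintA : ∀ (J : Fin p → Fin n) (j : Fin n),
      Integrable (fun x => u J x * (pd j c x * ψ x)) := fun J j =>
    integrable_mul_cc hφ (hu.1 J) (integrable_coeff_sq hφ hu J)
      ((pd_continuous hc j).mul hψc) hψ.2.mul_left
  have hintB : ∀ (J : Fin p → Fin n) (j : Fin n),
      Integrable (fun x => u J x * (c x * pd j ψ x)) := fun J j =>
    integrable_mul_cc hφ (hu.1 J) (integrable_coeff_sq hφ hu J)
      (hcc.mul (pd_continuous hψ.1 j)) ((pd_compactSupport hψ.1 hψ.2 j).mul_left)
  have hintg : Integrable (fun x => g M x * (c x * ψ x)) :=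
    integrable_mul_cc hφ (hg.1 M) (integrable_coeff_sq hφ hg M)
      (hcc.mul hψc) hψ.2.mul_left
  have h0 := hwd M (fun x => c x * ψ x) hcψ
  have h1 : ∀ k : Fin (p + 1),
      (∫ x, u (M ∘ k.succAbove) x * pd (M k) (fun y => c y * ψ y) x)
        = (∫ x, u (M ∘ k.succAbove) x * (pd (M k) c x * ψ x))
          + ∫ x, u (M ∘ k.succAbove) x * (c x * pd (M k) ψ x) := by
    intro k
    rw [← integral_add (hintA _ _) (hintB _ _)]
    refine integral_congr_ae (Filter.Eventually.of_forall fun x => ?_)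
    show u (M ∘ k.succAbove) x * pd (M k) (fun y => c y * ψ y) x
      = u (M ∘ k.succAbove) x * (pd (M k) c x * ψ x) + u (M ∘ k.succAbove) x * (c x * pd (M k) ψ x)
    rw [pd_mul hc hψ.1]
    ring
  simp only [h1] at h0
  -- decompose the left-hand side
  have hlhs : (∫ x, (c x * g M x + wedgeF (fun y j => pd j c y) u M x) * ψ x)
      = (∫ x, g M x * (c x * ψ x))
        + ∑ k : Fin (p + 1), (-1 : ℝ) ^ (k : ℕ)
            * ∫ x, u (M ∘ k.succAbove) x * (pd (M k) c x * ψ x) := by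
    have e1 : (fun x => (c x * g M x + wedgeF (fun y j => pd j c y) u M x) * ψ x)
        = fun x => g M x * (c x * ψ x)
          + ∑ k : Fin (p + 1), (-1 : ℝ) ^ (k : ℕ)
              * (u (M ∘ k.succAbove) x * (pd (M k) c x * ψ x)) := by
      funext x
      unfold wedgeF
      rw [add_mul, Finset.sum_mul]
      congr 1
      · ring
      · exact Finset.sum_congr rfl fun k _ => by ring
    rw [e1, integral_add hintg (integrable_finset_sum _ fun k _ => (hintA _ _).const_mul _)]
    congr 1
    rw [integral_finset_sum _ fun k _ => (hintA _ _).const_mul _]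
    exact Finset.sum_congr rfl fun k _ => integral_const_mul _ _
  have hrhs : ∀ k : Fin (p + 1),
      (∫ x, (fun J y => c y * u J y) (M ∘ k.succAbove) x * pd (M k) ψ x)
        = ∫ x, u (M ∘ k.succAbove) x * (c x * pd (M k) ψ x) := by
    intro k
    refine integral_congr_ae (Filter.Eventually.of_forall fun x => ?_)
    simp only
    ring
  rw [hlhs, h0]
  simp only [hrhs]
  rw [← Finset.sum_neg_distrib, ← Finset.sum_add_distrib, ← Finset.sum_neg_distrib]
  exact Finset.sum_congr rfl fun k _ => by ring

lemma neg_one_pow_sq (k : ℕ) : ((-1 : ℝ) ^ k) ^ 2 = 1 := by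
  rw [← pow_mul, mul_comm, pow_mul]
  norm_num

lemma aesm_wedge {e : Rn n → Fin n → ℝ} (he : ∀ j, Continuous fun x => e x j)
    {u : Form n p} (hu : ∀ J, AEStronglyMeasurable (u J) volume)
    (M : Fin (p + 1) → Fin n) : AEStronglyMeasurable (wedgeF e u M) volume := by
  refine Finset.aestronglyMeasurable_fun_sum _ fun k _ => ?_
  exact ((aestronglyMeasurable_const.mul (he (M k)).aestronglyMeasurable).mul (hu _))

lemma aesm_sF {e : Rn n → Fin n → ℝ} (he : ∀ j, Continuous fun x => e x j)
    {f : Form n (p + 1)} (hf : ∀ M, AEStronglyMeasurable (f M) volume)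
    (I : Fin p → Fin n) : AEStronglyMeasurable (sF e f I) volume := by
  refine aestronglyMeasurable_const.mul ?_
  refine Finset.aestronglyMeasurable_fun_sum _ fun k _ => ?_
  refine Finset.aestronglyMeasurable_fun_sum _ fun j _ => ?_
  exact (aestronglyMeasurable_const.mul (he j).aestronglyMeasurable).mul (hf _)

lemma integrable_sq_w_wedge (hφ : Continuous φ) {e : Rn n → Fin n → ℝ} {B : ℝ}
    (he : ∀ j, Continuous fun x => e x j) (heB : ∀ x j, (e x j) ^ 2 ≤ B)
    {u : Form n p} (hu : MemL2F φ u) (M : Fin (p + 1) → Fin n) :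
    Integrable (fun x => (wedgeF e u M x) ^ 2 * w φ x) := by
  have : (fun x => (wedgeF e u M x) ^ 2 * w φ x)
      = fun x => (∑ k : Fin (p + 1),
          ((-1 : ℝ) ^ (k : ℕ) * e x (M k)) * u (M ∘ k.succAbove) x) ^ 2 * w φ x := by
    funext x; unfold wedgeF; rfl
  rw [this]
  refine integrable_sq_w_sum hφ (fun k => ?_) (fun k => ?_)
  · exact (aestronglyMeasurable_const.mul (he (M k)).aestronglyMeasurable).mul (hu.1 _)
  · refine integrable_sq_w_bmul hφ (B := B) (fun x => ?_)
      (aestronglyMeasurable_const.mul (he (M k)).aestronglyMeasurable)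
      (hu.1 _) (integrable_coeff_sq hφ hu _)
    rw [mul_pow, neg_one_pow_sq, one_mul]
    exact heB x (M k)

lemma integrable_sq_w_sF (hφ : Continuous φ) {e : Rn n → Fin n → ℝ} {B : ℝ}
    (he : ∀ j, Continuous fun x => e x j) (heB : ∀ x j, (e x j) ^ 2 ≤ B)
    {f : Form n (p + 1)} (hf : MemL2F φ f) (I : Fin p → Fin n) :
    Integrable (fun x => (sF e f I x) ^ 2 * w φ x) := by
  have hsum : Integrable (fun x => (∑ kj : Fin (p + 1) × Fin n,
      ((-1 : ℝ) ^ (kj.1 : ℕ) * e x kj.2) * f (kj.1.insertNth kj.2 I) x) ^ 2 * w φ x) := by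
    refine integrable_sq_w_sum hφ (fun kj => ?_) (fun kj => ?_)
    · exact (aestronglyMeasurable_const.mul (he kj.2).aestronglyMeasurable).mul (hf.1 _)
    · refine integrable_sq_w_bmul hφ (B := B) (fun x => ?_)
        (aestronglyMeasurable_const.mul (he kj.2).aestronglyMeasurable)
        (hf.1 _) (integrable_coeff_sq hφ hf _)
      rw [mul_pow, neg_one_pow_sq, one_mul]
      exact heB x kj.2
  have : (fun x => (sF e f I x) ^ 2 * w φ x)
      = fun x => (((p : ℝ) + 1)⁻¹ * ∑ kj : Fin (p + 1) × Fin n,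
          ((-1 : ℝ) ^ (kj.1 : ℕ) * e x kj.2) * f (kj.1.insertNth kj.2 I) x) ^ 2 * w φ x := by
    funext x; unfold sF
    rw [Fintype.sum_prod_type]
  rw [this]
  refine integrable_sq_w_bmul hφ (B := (((p : ℝ) + 1)⁻¹) ^ 2) (fun x => le_refl _)
    aestronglyMeasurable_const
    (Finset.aestronglyMeasurable_fun_sum _ fun kj _ =>
      (aestronglyMeasurable_const.mul (he kj.2).aestronglyMeasurable).mul (hf.1 _)) hsum

lemma integrable_sq_w_sub (hφ : Continuous φ) {a b : Rn n → ℝ}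
    (ham : AEStronglyMeasurable a volume) (hbm : AEStronglyMeasurable b volume)
    (ha : Integrable (fun x => (a x) ^ 2 * w φ x))
    (hb : Integrable (fun x => (b x) ^ 2 * w φ x)) :
    Integrable (fun x => (a x - b x) ^ 2 * w φ x) := by
  refine Integrable.mono' ((ha.add hb).const_mul 2) (((ham.sub hbm).pow 2).mul (aesm_w hφ)) ?_
  refine Filter.Eventually.of_forall fun x => ?_
  have hw := w_nonneg φ x
  rw [Real.norm_eq_abs, abs_of_nonneg (mul_nonneg (sq_nonneg _) hw)]
  calc (a x - b x) ^ 2 * w φ x ≤ (2 * ((a x) ^ 2 + (b x) ^ 2)) * w φ x := by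
        nlinarith [sq_nonneg (a x + b x)]
    _ = 2 * ((a x) ^ 2 * w φ x + (b x) ^ 2 * w φ x) := by ring

lemma integrable_sq_w_add (hφ : Continuous φ) {a b : Rn n → ℝ}
    (ham : AEStronglyMeasurable a volume) (hbm : AEStronglyMeasurable b volume)
    (ha : Integrable (fun x => (a x) ^ 2 * w φ x))
    (hb : Integrable (fun x => (b x) ^ 2 * w φ x)) :
    Integrable (fun x => (a x + b x) ^ 2 * w φ x) := by
  have := integrable_sq_w_sub hφ ham hbm.neg ha (by simpa using hb)
  simpa [sub_neg_eq_add] using this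

lemma integrable_inner (hφ : Continuous φ) {α β : Form n p}
    (hα : MemL2F φ α) (hβ : MemL2F φ β) :
    Integrable (fun x => ((Nat.factorial p : ℝ)⁻¹
      * ∑ J : Fin p → Fin n, α J x * β J x) * Real.exp (-(φ x))) := by
  have : (fun x => ((Nat.factorial p : ℝ)⁻¹
        * ∑ J : Fin p → Fin n, α J x * β J x) * Real.exp (-(φ x)))
      = fun x => (Nat.factorial p : ℝ)⁻¹
          * ∑ J : Fin p → Fin n, (α J x * β J x * w φ x) := by
    funext x; unfold w; rw [mul_assoc, Finset.sum_mul]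
  rw [this]
  exact (integrable_finset_sum _ fun J _ => integrable_mul_weight hφ (hα.1 J) (hβ.1 J)
    (integrable_coeff_sq hφ hα J) (integrable_coeff_sq hφ hβ J)).const_mul _

lemma sF_sq_le {e : Rn n → Fin n → ℝ} {B : ℝ} (hB : 0 ≤ B)
    (heB : ∀ x j, (e x j) ^ 2 ≤ B) (f : Form n (p + 1)) (I : Fin p → Fin n) (x : Rn n) :
    (sF e f I x) ^ 2 ≤ (((p : ℝ) + 1) * n) ^ 2 * B
      * ∑ M : Fin (p + 1) → Fin n, (f M x) ^ 2 := by
  have hsumf : ∀ M, (f M x) ^ 2 ≤ ∑ M' : Fin (p + 1) → Fin n, (f M' x) ^ 2 := fun M =>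
    Finset.single_le_sum (f := fun M' => (f M' x) ^ 2) (fun _ _ => sq_nonneg _)
      (Finset.mem_univ M)
  have hfnn : 0 ≤ ∑ M' : Fin (p + 1) → Fin n, (f M' x) ^ 2 :=
    Finset.sum_nonneg fun _ _ => sq_nonneg _
  have hS : sF e f I x = ((p : ℝ) + 1)⁻¹ * ∑ kj : Fin (p + 1) × Fin n,
      (-1 : ℝ) ^ (kj.1 : ℕ) * e x kj.2 * f (kj.1.insertNth kj.2 I) x := by
    unfold sF; rw [Fintype.sum_prod_type]
  rw [hS, mul_pow]
  have hc : (((p : ℝ) + 1)⁻¹) ^ 2 ≤ 1 := by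
    have h0 : (0 : ℝ) ≤ (p : ℝ) := Nat.cast_nonneg p
    have h1 : (1 : ℝ) ≤ (p : ℝ) + 1 := by linarith
    have h2 := inv_le_one_of_one_le₀ h1
    have h3 : (0 : ℝ) ≤ ((p : ℝ) + 1)⁻¹ := by positivity
    nlinarith
  have hsq : (∑ kj : Fin (p + 1) × Fin n,
        (-1 : ℝ) ^ (kj.1 : ℕ) * e x kj.2 * f (kj.1.insertNth kj.2 I) x) ^ 2
      ≤ (((p : ℝ) + 1) * n) * ∑ kj : Fin (p + 1) × Fin n,
          ((-1 : ℝ) ^ (kj.1 : ℕ) * e x kj.2 * f (kj.1.insertNth kj.2 I) x) ^ 2 := by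
    have := sq_sum_le_card_mul_sum_sq (s := (Finset.univ : Finset (Fin (p + 1) × Fin n)))
      (f := fun kj => (-1 : ℝ) ^ (kj.1 : ℕ) * e x kj.2 * f (kj.1.insertNth kj.2 I) x)
    simpa [Fintype.card_prod, Fintype.card_fin] using this
  have hterm : ∀ kj : Fin (p + 1) × Fin n,
      ((-1 : ℝ) ^ (kj.1 : ℕ) * e x kj.2 * f (kj.1.insertNth kj.2 I) x) ^ 2
        ≤ B * ∑ M' : Fin (p + 1) → Fin n, (f M' x) ^ 2 := by
    intro kj
    have h1 : ((-1 : ℝ) ^ (kj.1 : ℕ) * e x kj.2 * f (kj.1.insertNth kj.2 I) x) ^ 2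
        = (e x kj.2) ^ 2 * (f (kj.1.insertNth kj.2 I) x) ^ 2 := by
      rw [mul_pow, mul_pow, neg_one_pow_sq, one_mul]
    rw [h1]
    calc (e x kj.2) ^ 2 * (f (kj.1.insertNth kj.2 I) x) ^ 2
        ≤ B * (f (kj.1.insertNth kj.2 I) x) ^ 2 :=
          mul_le_mul_of_nonneg_right (heB x kj.2) (sq_nonneg _)
      _ ≤ B * ∑ M' : Fin (p + 1) → Fin n, (f M' x) ^ 2 :=
          mul_le_mul_of_nonneg_left (hsumf _) hB
  have hsum2 : ∑ kj : Fin (p + 1) × Fin n,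
      ((-1 : ℝ) ^ (kj.1 : ℕ) * e x kj.2 * f (kj.1.insertNth kj.2 I) x) ^ 2
      ≤ (((p : ℝ) + 1) * n) * (B * ∑ M' : Fin (p + 1) → Fin n, (f M' x) ^ 2) := by
    calc _ ≤ ∑ _kj : Fin (p + 1) × Fin n,
          (B * ∑ M' : Fin (p + 1) → Fin n, (f M' x) ^ 2) :=
          Finset.sum_le_sum fun kj _ => hterm kj
      _ = (((p : ℝ) + 1) * n) * (B * ∑ M' : Fin (p + 1) → Fin n, (f M' x) ^ 2) := by
          rw [Finset.sum_const, nsmul_eq_mul]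
          simp only [Finset.card_univ, Fintype.card_prod, Fintype.card_fin]
          push_cast
          ring
  have hNn : (0 : ℝ) ≤ ((p : ℝ) + 1) * n := by positivity
  calc (((p : ℝ) + 1)⁻¹) ^ 2 * (∑ kj : Fin (p + 1) × Fin n,
        (-1 : ℝ) ^ (kj.1 : ℕ) * e x kj.2 * f (kj.1.insertNth kj.2 I) x) ^ 2
      ≤ 1 * (∑ kj : Fin (p + 1) × Fin n,
        (-1 : ℝ) ^ (kj.1 : ℕ) * e x kj.2 * f (kj.1.insertNth kj.2 I) x) ^ 2 :=
        mul_le_mul_of_nonneg_right hc (sq_nonneg _)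
    _ = _ := one_mul _
    _ ≤ (((p : ℝ) + 1) * n) * ∑ kj : Fin (p + 1) × Fin n,
          ((-1 : ℝ) ^ (kj.1 : ℕ) * e x kj.2 * f (kj.1.insertNth kj.2 I) x) ^ 2 := hsq
    _ ≤ (((p : ℝ) + 1) * n) * ((((p : ℝ) + 1) * n) *
          (B * ∑ M' : Fin (p + 1) → Fin n, (f M' x) ^ 2)) :=
        mul_le_mul_of_nonneg_left hsum2 hNn
    _ = (((p : ℝ) + 1) * n) ^ 2 * B * ∑ M : Fin (p + 1) → Fin n, (f M x) ^ 2 := by ring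

lemma sF_zero {e : Rn n → Fin n → ℝ} {x : Rn n} (hx : ∀ j, e x j = 0)
    (f : Form n (p + 1)) (I : Fin p → Fin n) : sF e f I x = 0 := by
  unfold sF
  have : ∀ k : Fin (p + 1), ∑ j : Fin n, (-1 : ℝ) ^ (k : ℕ) * e x j
      * f (k.insertNth j I) x = 0 := fun k =>
    Finset.sum_eq_zero fun j _ => by rw [hx j]; ring
  rw [Finset.sum_eq_zero fun k _ => this k]
  ring

lemma memL2F_bmul (hφ : Continuous φ) {c : Rn n → ℝ} {B : ℝ} (hcc : Continuous c)
    (hc2 : ∀ x, (c x) ^ 2 ≤ B) {α : Form n p} (hα : MemL2F φ α) :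
    MemL2F φ (fun J y => c y * α J y) :=
  memL2F_of_coeffs hφ (fun J => hcc.aestronglyMeasurable.mul (hα.1 J))
    (fun J => integrable_sq_w_bmul hφ hc2 hcc.aestronglyMeasurable (hα.1 J)
      (integrable_coeff_sq hφ hα J))

lemma memL2F_sF (hφ : Continuous φ) {e : Rn n → Fin n → ℝ} {B : ℝ}
    (he : ∀ j, Continuous fun x => e x j) (heB : ∀ x j, (e x j) ^ 2 ≤ B)
    {f : Form n (p + 1)} (hf : MemL2F φ f) : MemL2F φ (sF e f) :=
  memL2F_of_coeffs hφ (fun I => aesm_sF he hf.1 I)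
    (fun I => integrable_sq_w_sF hφ he heB hf I)

end Stmt14

open Stmt14
/-- truncation by radial cutoffs preserves `Dom(T*)` and
`T*(η_ν f) → T*f` in `L²_p(e^{-φ})`. -/
theorem stmt14 {n p : ℕ} (φ : Rn n → ℝ) (hφ : ContDiff ℝ (⊤ : ℕ∞) φ)
    (η : ℕ → Rn n → ℝ)
    (hηsm : ∀ ν, ContDiff ℝ (⊤ : ℕ∞) (η ν))
    (hη1 : ∀ (ν : ℕ) (x : Rn n), ‖x‖ ≤ (ν : ℝ) → η ν x = 1)
    (hη0 : ∀ (ν : ℕ) (x : Rn n), (ν : ℝ) + 1 ≤ ‖x‖ → η ν x = 0)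
    (hηbd : ∀ (ν : ℕ) (x : Rn n), 0 ≤ η ν x ∧ η ν x ≤ 1)
    (hηgrad : ∀ (ν : ℕ) (x : Rn n), ∑ j : Fin n, (pd j (η ν) x) ^ 2 ≤ 4 * n)
    (f : Form n (p + 1)) (h : Form n p) (hadj : IsAdjoint φ f h) :
    ∃ H : ℕ → Form n p,
      (∀ ν, IsAdjoint φ (fun J y => η ν y * f J y) (H ν)) ∧
      Tendsto (fun ν => ∫ x, normSq (fun I y => H ν I y - h I y) x * Real.exp (-(φ x)))
        atTop (nhds 0) := by
  classical
  have hφc : Continuous φ := hφ.continuous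
  obtain ⟨hf, hh, hkey⟩ := hadj
  have he_cont : ∀ (ν : ℕ) (j : Fin n), Continuous fun x => pd j (η ν) x :=
    fun ν j => pd_continuous (hηsm ν) j
  have heB : ∀ (ν : ℕ) (x : Rn n) (j : Fin n), (pd j (η ν) x) ^ 2 ≤ 4 * (n : ℝ) :=
    fun ν x j => le_trans
      (Finset.single_le_sum (f := fun j => (pd j (η ν) x) ^ 2)
        (fun _ _ => sq_nonneg _) (Finset.mem_univ j)) (hηgrad ν x)
  have hηc : ∀ ν, Continuous (η ν) := fun ν => (hηsm ν).continuous
  have hη_sq : ∀ (ν : ℕ) (x : Rn n), (η ν x) ^ 2 ≤ 1 := fun ν x => by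
    nlinarith [(hηbd ν x).1, (hηbd ν x).2]
  refine ⟨fun ν I x => η ν x * h I x - sF (fun y j => pd j (η ν) y) f I x,
    fun ν => ?_, ?_⟩
  · -- IsAdjoint
    show IsAdjoint φ (fun J y => η ν y * f J y)
      (fun I x => η ν x * h I x - sF (fun y j => pd j (η ν) y) f I x)
    have hmemηf : MemL2F φ (fun J y => η ν y * f J y) :=
      memL2F_bmul hφc (hηc ν) (hη_sq ν) hf
    have hmemsf : MemL2F φ (sF (fun y j => pd j (η ν) y) f) :=
      memL2F_sF hφc (he_cont ν) (heB ν) hf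
    have hmemηh : MemL2F φ (fun I y => η ν y * h I y) :=
      memL2F_bmul hφc (hηc ν) (hη_sq ν) hh
    have hmemH : MemL2F φ (fun I x => η ν x * h I x
        - sF (fun y j => pd j (η ν) y) f I x) :=
      memL2F_of_coeffs hφc
        (fun I => ((hηc ν).aestronglyMeasurable.mul (hh.1 I)).sub
          (aesm_sF (he_cont ν) hf.1 I))
        (fun I => integrable_sq_w_sub hφc
          ((hηc ν).aestronglyMeasurable.mul (hh.1 I)) (aesm_sF (he_cont ν) hf.1 I)
          (integrable_sq_w_bmul hφc (hη_sq ν) (hηc ν).aestronglyMeasurable (hh.1 I)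
            (integrable_coeff_sq hφc hh I))
          (integrable_sq_w_sF hφc (he_cont ν) (heB ν) hf I))
    refine ⟨hmemηf, hmemH, ?_⟩
    intro u g hu hg hwd
    have hwd2 := weakD_mul hφc (hηsm ν) hu hg hwd
    have hu2 : MemL2F φ (fun J y => η ν y * u J y) :=
      memL2F_bmul hφc (hηc ν) (hη_sq ν) hu
    have hg2 : MemL2F φ (fun M y => η ν y * g M y
        + wedgeF (fun x j => pd j (η ν) x) u M y) :=
      memL2F_of_coeffs hφc
        (fun M => ((hηc ν).aestronglyMeasurable.mul (hg.1 M)).add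
          (aesm_wedge (he_cont ν) hu.1 M))
        (fun M => integrable_sq_w_add hφc
          ((hηc ν).aestronglyMeasurable.mul (hg.1 M)) (aesm_wedge (he_cont ν) hu.1 M)
          (integrable_sq_w_bmul hφc (hη_sq ν) (hηc ν).aestronglyMeasurable (hg.1 M)
            (integrable_coeff_sq hφc hg M))
          (integrable_sq_w_wedge hφc (he_cont ν) (heB ν) hu M))
    have key := hkey _ _ hu2 hg2 hwd2
    have e1 : innerF φ (fun M y => η ν y * g M y
          + wedgeF (fun x j => pd j (η ν) x) u M y) f
        = innerF φ g (fun J y => η ν y * f J y)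
          + innerF φ u (sF (fun y j => pd j (η ν) y) f) := by
      unfold innerF
      rw [← integral_add (integrable_inner hφc hg hmemηf) (integrable_inner hφc hu hmemsf)]
      refine integral_congr_ae (Filter.Eventually.of_forall fun x => ?_)
      simp only [Pi.add_apply]
      have hsplit : ∑ M : Fin (p + 1) → Fin n,
          (η ν x * g M x + wedgeF (fun x j => pd j (η ν) x) u M x) * f M x
          = (∑ M : Fin (p + 1) → Fin n, g M x * (η ν x * f M x))
            + ∑ M : Fin (p + 1) → Fin n,
                wedgeF (fun x j => pd j (η ν) x) u M x * f M x := by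
        rw [← Finset.sum_add_distrib]
        exact Finset.sum_congr rfl fun M _ => by ring
      have hwp := wedge_pair_pointwise (fun x j => pd j (η ν) x) u f x
      show ((Nat.factorial (p + 1) : ℝ)⁻¹ * ∑ M : Fin (p + 1) → Fin n,
          (η ν x * g M x + wedgeF (fun x j => pd j (η ν) x) u M x) * f M x)
            * Real.exp (-(φ x))
        = ((Nat.factorial (p + 1) : ℝ)⁻¹ * ∑ M : Fin (p + 1) → Fin n,
            g M x * (η ν x * f M x)) * Real.exp (-(φ x))
          + ((Nat.factorial p : ℝ)⁻¹ * ∑ I : Fin p → Fin n,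
              u I x * sF (fun y j => pd j (η ν) y) f I x) * Real.exp (-(φ x))
      rw [hsplit, mul_add, add_mul, hwp]
    have e2 : innerF φ (fun J y => η ν y * u J y) h
        = innerF φ u (fun I y => η ν y * h I y) := by
      unfold innerF
      refine integral_congr_ae (Filter.Eventually.of_forall fun x => ?_)
      simp only
      rw [show ∑ I : Fin p → Fin n, η ν x * u I x * h I x
          = ∑ I : Fin p → Fin n, u I x * (η ν x * h I x) from
        Finset.sum_congr rfl fun I _ => by ring]
    have e3 : innerF φ u (fun I x => η ν x * h I x
          - sF (fun y j => pd j (η ν) y) f I x)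
        = innerF φ u (fun I y => η ν y * h I y)
          - innerF φ u (sF (fun y j => pd j (η ν) y) f) := by
      unfold innerF
      rw [← integral_sub (integrable_inner hφc hu hmemηh) (integrable_inner hφc hu hmemsf)]
      refine integral_congr_ae (Filter.Eventually.of_forall fun x => ?_)
      simp only [Pi.sub_apply]
      rw [show ∑ I : Fin p → Fin n, u I x * (η ν x * h I x
            - sF (fun y j => pd j (η ν) y) f I x)
          = (∑ I : Fin p → Fin n, u I x * (η ν x * h I x))
            - ∑ I : Fin p → Fin n, u I x * sF (fun y j => pd j (η ν) y) f I x from by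
        rw [← Finset.sum_sub_distrib]
        exact Finset.sum_congr rfl fun I _ => by ring]
      ring
    rw [e1] at key
    rw [e2] at key
    rw [e3]
    linarith
  · -- convergence
    show Tendsto (fun ν => ∫ x, normSq (fun I y =>
        (η ν y * h I y - sF (fun y j => pd j (η ν) y) f I y) - h I y) x
        * Real.exp (-(φ x))) atTop (nhds 0)
    set K : ℝ := (((p : ℝ) + 1) * n) ^ 2 * (4 * (n : ℝ)) with hK
    set C2 : ℝ := (Nat.factorial p : ℝ)⁻¹ * (Fintype.card (Fin p → Fin n) : ℝ)
      * (2 * K) * ((Nat.factorial (p + 1) : ℝ)) with hC2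
    have hDm : ∀ (ν : ℕ) (I : Fin p → Fin n), AEStronglyMeasurable
        (fun y => (η ν y * h I y - sF (fun y j => pd j (η ν) y) f I y) - h I y)
        volume := fun ν I =>
      (((hηc ν).aestronglyMeasurable.mul (hh.1 I)).sub
        (aesm_sF (he_cont ν) hf.1 I)).sub (hh.1 I)
    have hFm : ∀ ν : ℕ, AEStronglyMeasurable (fun x => normSq (fun I y =>
        (η ν y * h I y - sF (fun y j => pd j (η ν) y) f I y) - h I y) x
        * Real.exp (-(φ x))) volume := by
      intro ν
      unfold normSq
      exact (aestronglyMeasurable_const.mul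
        (Finset.aestronglyMeasurable_fun_sum _ fun I _ => (hDm ν I).pow 2)).mul (aesm_w hφc)
    have hbound_int : Integrable (fun x =>
        2 * (normSq h x * Real.exp (-(φ x))) + C2 * (normSq f x * Real.exp (-(φ x)))) :=
      (hh.2.const_mul 2).add (hf.2.const_mul C2)
    have hb : ∀ ν : ℕ, ∀ᵐ x : Rn n, ‖normSq (fun I y =>
        (η ν y * h I y - sF (fun y j => pd j (η ν) y) f I y) - h I y) x
        * Real.exp (-(φ x))‖
        ≤ 2 * (normSq h x * Real.exp (-(φ x))) + C2 * (normSq f x * Real.exp (-(φ x))) := by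
      intro ν
      refine Filter.Eventually.of_forall fun x => ?_
      rw [Real.norm_eq_abs, abs_of_nonneg (mul_nonneg (normSq_nonneg x) (Real.exp_nonneg _))]
      have hDle : ∀ I : Fin p → Fin n,
          ((η ν x * h I x - sF (fun y j => pd j (η ν) y) f I x) - h I x) ^ 2
          ≤ 2 * (h I x) ^ 2 + 2 * K * ∑ M : Fin (p + 1) → Fin n, (f M x) ^ 2 := by
        intro I
        have hs2 := sF_sq_le (B := 4 * (n : ℝ)) (by positivity) (heB ν) f I x
        have ha1 := (hηbd ν x).1
        have ha2 := (hηbd ν x).2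
        have hab : (η ν x - 1) ^ 2 ≤ 1 := by nlinarith
        have hb2 : ((η ν x - 1) * h I x) ^ 2 ≤ (h I x) ^ 2 := by
          rw [mul_pow]
          nlinarith [sq_nonneg (h I x)]
        have heq : (η ν x * h I x - sF (fun y j => pd j (η ν) y) f I x) - h I x
            = (η ν x - 1) * h I x - sF (fun y j => pd j (η ν) y) f I x := by ring
        rw [heq, hK]
        nlinarith [sq_nonneg ((η ν x - 1) * h I x + sF (fun y j => pd j (η ν) y) f I x)]
      have hsum : ∑ I : Fin p → Fin n,
          ((η ν x * h I x - sF (fun y j => pd j (η ν) y) f I x) - h I x) ^ 2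
          ≤ 2 * (∑ I : Fin p → Fin n, (h I x) ^ 2)
            + (Fintype.card (Fin p → Fin n) : ℝ)
              * (2 * K * ∑ M : Fin (p + 1) → Fin n, (f M x) ^ 2) := by
        calc ∑ I : Fin p → Fin n, ((η ν x * h I x
                - sF (fun y j => pd j (η ν) y) f I x) - h I x) ^ 2
            ≤ ∑ I : Fin p → Fin n, (2 * (h I x) ^ 2
                + 2 * K * ∑ M : Fin (p + 1) → Fin n, (f M x) ^ 2) :=
              Finset.sum_le_sum fun I _ => hDle I
          _ = 2 * (∑ I : Fin p → Fin n, (h I x) ^ 2)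
              + (Fintype.card (Fin p → Fin n) : ℝ)
                * (2 * K * ∑ M : Fin (p + 1) → Fin n, (f M x) ^ 2) := by
              rw [Finset.sum_add_distrib, ← Finset.mul_sum, Finset.sum_const,
                nsmul_eq_mul, Finset.card_univ]
      have hhs : ∑ I : Fin p → Fin n, (h I x) ^ 2
          = (Nat.factorial p : ℝ) * normSq h x := by
        unfold normSq
        rw [← mul_assoc, mul_inv_cancel₀ (by positivity : (Nat.factorial p : ℝ) ≠ 0), one_mul]
      have hfs : ∑ M : Fin (p + 1) → Fin n, (f M x) ^ 2
          = (Nat.factorial (p + 1) : ℝ) * normSq f x := by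
        unfold normSq
        rw [← mul_assoc, mul_inv_cancel₀
          (by positivity : (Nat.factorial (p + 1) : ℝ) ≠ 0), one_mul]
      have hns : normSq (fun I y => (η ν y * h I y
            - sF (fun y j => pd j (η ν) y) f I y) - h I y) x
          ≤ 2 * normSq h x + C2 * normSq f x := by
        unfold normSq
        have hinv : (0 : ℝ) ≤ (Nat.factorial p : ℝ)⁻¹ := by positivity
        have := mul_le_mul_of_nonneg_left hsum hinv
        refine le_trans this (le_of_eq ?_)
        rw [hhs, hfs, hC2]
        have hfac : (Nat.factorial p : ℝ)⁻¹ * (Nat.factorial p : ℝ) = 1 :=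
          inv_mul_cancel₀ (by positivity)
        field_simp
      calc normSq (fun I y => (η ν y * h I y
            - sF (fun y j => pd j (η ν) y) f I y) - h I y) x * Real.exp (-(φ x))
          ≤ (2 * normSq h x + C2 * normSq f x) * Real.exp (-(φ x)) :=
            mul_le_mul_of_nonneg_right hns (Real.exp_nonneg _)
        _ = 2 * (normSq h x * Real.exp (-(φ x))) + C2 * (normSq f x * Real.exp (-(φ x))) := by
            ring
    have hlim : ∀ᵐ x : Rn n, Tendsto (fun ν : ℕ => normSq (fun I y =>
        (η ν y * h I y - sF (fun y j => pd j (η ν) y) f I y) - h I y) x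
        * Real.exp (-(φ x))) atTop (nhds 0) := by
      refine Filter.Eventually.of_forall fun x => ?_
      have hev : ∀ᶠ ν : ℕ in atTop, normSq (fun I y =>
          (η ν y * h I y - sF (fun y j => pd j (η ν) y) f I y) - h I y) x
          * Real.exp (-(φ x)) = 0 := by
        filter_upwards [eventually_ge_atTop (⌊‖x‖⌋₊ + 1)] with ν hν
        have hxlt : ‖x‖ < (ν : ℝ) := by
          have h1 : ‖x‖ < (⌊‖x‖⌋₊ : ℝ) + 1 := Nat.lt_floor_add_one _
          have h2 : ((⌊‖x‖⌋₊ + 1 : ℕ) : ℝ) ≤ (ν : ℝ) := by exact_mod_cast hν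
          push_cast at h2
          linarith
        have hloc : η ν =ᶠ[nhds x] fun _ => 1 := by
          have hopen : IsOpen {y : Rn n | ‖y‖ < (ν : ℝ)} :=
            isOpen_lt continuous_norm continuous_const
          exact Filter.eventuallyEq_of_mem (hopen.mem_nhds hxlt)
            fun y hy => hη1 ν y (le_of_lt hy)
        have hpd : ∀ j : Fin n, pd j (η ν) x = 0 := fun j => pd_eventually_const hloc j
        have hη1x : η ν x = 1 := hη1 ν x hxlt.le
        have hD0 : ∀ I : Fin p → Fin n,
            (η ν x * h I x - sF (fun y j => pd j (η ν) y) f I x) - h I x = 0 := by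
          intro I
          rw [hη1x, sF_zero (fun j => hpd j) f I]
          ring
        unfold normSq
        rw [Finset.sum_eq_zero fun I _ => by simp only; rw [hD0 I]; ring]
        ring
      have hevq : (fun ν : ℕ => normSq (fun I y =>
          (η ν y * h I y - sF (fun y j => pd j (η ν) y) f I y) - h I y) x
          * Real.exp (-(φ x))) =ᶠ[atTop] (fun _ => (0 : ℝ)) := hev
      exact Tendsto.congr' hevq.symm tendsto_const_nhds
    have := tendsto_integral_of_dominated_convergence _ hFm hbound_int hb hlim
    simpa using this
end
end
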